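/- arXiv:1006.5730 — 9 statements merged into one kernel-verified Lean document; each statement's English description precedes it below -/
import Mathlib

section
/- For all integers k, ℓ ≥ 1, the spatial autoregressive process admits the moving-average representation X_{k,ℓ} = Σ_{i=1}^{k} Σ_{j=1}^{ℓ} G(k−i, ℓ−j; α, β, γ) ε_{i,j} (almost surely). -/
/-!
`G m n` is the total weight of the lattice paths from `(0,0)` to `(m,n)` with steps `(1,0)`,
`(0,1)`, `(1,1)` of weights `α`, `β`, `γ`: the summand with index `r` counts the paths with `r`
diagonal steps. Conditioning on the last step gives `G (m+1) (n+1) = α G m (n+1) + β G (m+1) n +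
γ G m n` with `G m 0 = α ^ m`, `G 0 n = β ^ n`; these say that the convolution of `G` with `ε`
satisfies the recursion and boundary conditions of `X`, and the recursion determines `X`
pathwise.
-/

open MeasureTheory ProbabilityTheory Filter

/-- `G m n α β γ = Σ_{r=0}^{min(m,n)} ((m+n−r)!/((m−r)!(n−r)!r!)) α^{m−r} β^{n−r} γ^r`. -/
noncomputable def G (m n : ℕ) (α β γ : ℝ) : ℝ :=
  ∑ r ∈ Finset.range (min m n + 1),
    ((Nat.factorial (m + n - r) : ℝ) /
      ((Nat.factorial (m - r) : ℝ) * (Nat.factorial (n - r) : ℝ) * (Nat.factorial r : ℝ))) *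
      α ^ (m - r) * β ^ (n - r) * γ ^ r

open Finset Nat

/-- `m.choose r * (m + n - r).choose m = (m + n - r)! / ((m - r)! (n - r)! r!)` for
`r ≤ min m n`; in this binomial form it vanishes for `r > min m n`, so the range of the sum
defining `G` may be enlarged at will. -/
def pathCount (m n r : ℕ) : ℕ := m.choose r * (m + n - r).choose m

theorem pathCount_eq_zero_of_lt_left {m n r : ℕ} (h : m < r) : pathCount m n r = 0 := by
  simp [pathCount, choose_eq_zero_of_lt h]

theorem pathCount_eq_zero_of_lt_right {m n r : ℕ} (h : n < r) : pathCount m n r = 0 := by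
  rcases lt_or_ge m r with hm | hm
  · exact pathCount_eq_zero_of_lt_left hm
  · simp [pathCount, choose_eq_zero_of_lt (show m + n - r < m by omega)]

theorem pathCount_succ_succ_zero (m n : ℕ) :
    pathCount (m + 1) (n + 1) 0 = pathCount m (n + 1) 0 + pathCount (m + 1) n 0 := by
  simp only [pathCount, choose_zero_right, one_mul, Nat.sub_zero,
    show m + 1 + (n + 1) = (m + n + 1) + 1 by ring, show m + 1 + n = m + n + 1 by ring,
    show m + (n + 1) = m + n + 1 by ring, choose_succ_succ']

theorem pathCount_succ_succ_succ (m n r : ℕ) :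
    pathCount (m + 1) (n + 1) (r + 1) =
      pathCount m (n + 1) (r + 1) + pathCount (m + 1) n (r + 1) + pathCount m n r := by
  rcases le_or_gt r (m + n) with h | h
  · simp only [pathCount, choose_succ_succ' m r,
      show m + 1 + (n + 1) - (r + 1) = (m + n - r) + 1 by omega,
      show m + (n + 1) - (r + 1) = m + n - r by omega,
      show m + 1 + n - (r + 1) = m + n - r by omega, choose_succ_succ' (m + n - r) m]
    ring
  · simp [pathCount, choose_eq_zero_of_lt (show m < r by omega),
      choose_eq_zero_of_lt (show m < r + 1 by omega),
      choose_eq_zero_of_lt (show m + 1 < r + 1 by omega)]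

theorem pathCount_eq_factorial_div {m n r : ℕ} (hm : r ≤ m) (hn : r ≤ n) :
    (pathCount m n r : ℝ) = (m + n - r)! / ((m - r)! * (n - r)! * r !) := by
  rw [eq_div_iff (by positivity)]
  have h₁ := choose_mul_factorial_mul_factorial hm
  have h₂ := choose_mul_factorial_mul_factorial (show m ≤ m + n - r by omega)
  rw [show m + n - r - m = n - r by omega] at h₂
  rw [← h₂, ← h₁]
  push_cast [pathCount]
  ring

theorem G_eq_sum_pathCount {m n N : ℕ} (α β γ : ℝ) (hN : min m n < N) :
    G m n α β γ = ∑ r ∈ range N, pathCount m n r * α ^ (m - r) * β ^ (n - r) * γ ^ r := by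
  rw [G]
  refine sum_subset_zero_on_sdiff (by simpa using hN) (fun r hr => ?_) (fun r hr => ?_)
  · have hr := (Finset.mem_sdiff.1 hr).2
    rw [mem_range] at hr
    rcases (show m < r ∨ n < r by omega) with h | h
    · simp [pathCount_eq_zero_of_lt_left h]
    · simp [pathCount_eq_zero_of_lt_right h]
  · rw [mem_range] at hr
    rw [pathCount_eq_factorial_div (by omega) (by omega)]

theorem G_zero_right (m : ℕ) (α β γ : ℝ) : G m 0 α β γ = α ^ m := by
  simp [G_eq_sum_pathCount α β γ (show min m 0 < 1 by simp), pathCount]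

theorem G_zero_left (n : ℕ) (α β γ : ℝ) : G 0 n α β γ = β ^ n := by
  simp [G_eq_sum_pathCount α β γ (show min 0 n < 1 by simp), pathCount]

theorem pathCount_term_succ_succ_succ (m n r : ℕ) (α β γ : ℝ) :
    (pathCount (m + 1) (n + 1) (r + 1) : ℝ) * α ^ (m - r) * β ^ (n - r) * γ ^ (r + 1) =
      α * (pathCount m (n + 1) (r + 1) * α ^ (m - (r + 1)) * β ^ (n - r) * γ ^ (r + 1)) +
      β * (pathCount (m + 1) n (r + 1) * α ^ (m - r) * β ^ (n - (r + 1)) * γ ^ (r + 1)) +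
      γ * (pathCount m n r * α ^ (m - r) * β ^ (n - r) * γ ^ r) := by
  have hα : α * (pathCount m (n + 1) (r + 1) * α ^ (m - (r + 1))) =
      pathCount m (n + 1) (r + 1) * α ^ (m - r) := by
    rcases lt_or_ge r m with h | h
    · rw [show m - r = m - (r + 1) + 1 by omega, pow_succ]; ring
    · simp [pathCount_eq_zero_of_lt_left (show m < r + 1 by omega)]
  have hβ : β * (pathCount (m + 1) n (r + 1) * β ^ (n - (r + 1))) =
      pathCount (m + 1) n (r + 1) * β ^ (n - r) := by
    rcases lt_or_ge r n with h | h
    · rw [show n - r = n - (r + 1) + 1 by omega, pow_succ]; ring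
    · simp [pathCount_eq_zero_of_lt_right (show n < r + 1 by omega)]
  push_cast [pathCount_succ_succ_succ]
  linear_combination -(β ^ (n - r) * γ ^ (r + 1)) * hα - (α ^ (m - r) * γ ^ (r + 1)) * hβ

theorem G_succ_succ (m n : ℕ) (α β γ : ℝ) :
    G (m + 1) (n + 1) α β γ =
      α * G m (n + 1) α β γ + β * G (m + 1) n α β γ + γ * G m n α β γ := by
  rw [G_eq_sum_pathCount (N := m + n + 1 + 1) α β γ (by omega),
    G_eq_sum_pathCount (N := m + n + 1 + 1) α β γ (by omega),
    G_eq_sum_pathCount (N := m + n + 1 + 1) α β γ (by omega),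
    G_eq_sum_pathCount (N := m + n + 1) α β γ (by omega)]
  simp only [sum_range_succ' _ (m + n + 1), Nat.add_sub_add_right, pathCount_term_succ_succ_succ,
    sum_add_distrib, ← mul_sum, pathCount_succ_succ_zero, Nat.sub_zero]
  push_cast
  ring

theorem eq_sum_kernel_mul_of_rec {R : Type*} [CommRing R] (α β γ : R) (K x e : ℕ → ℕ → R)
    (hK_zero : K 0 0 = 1) (hK_zero_right : ∀ p, K (p + 1) 0 = α * K p 0)
    (hK_zero_left : ∀ q, K 0 (q + 1) = β * K 0 q)
    (hK : ∀ p q, K (p + 1) (q + 1) = α * K p (q + 1) + β * K (p + 1) q + γ * K p q)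
    (hx_zero_right : ∀ k, x k 0 = 0) (hx_zero_left : ∀ ℓ, x 0 ℓ = 0)
    (hx : ∀ k ℓ, x (k + 1) (ℓ + 1) =
      α * x k (ℓ + 1) + β * x (k + 1) ℓ + γ * x k ℓ + e (k + 1) (ℓ + 1))
    (k ℓ : ℕ) :
    x k ℓ = ∑ p ∈ range k, ∑ q ∈ range ℓ, K p q * e (k - p) (ℓ - q) := by
  induction k generalizing ℓ with
  | zero => simp [hx_zero_left]
  | succ k ihk =>
    induction ℓ with
    | zero => simp [hx_zero_right]
    | succ ℓ ihℓ =>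
      rw [hx, ihk, ihk, ihℓ]
      simp only [sum_range_succ', hK_zero, hK_zero_right, hK_zero_left, hK, Nat.add_sub_add_right,
        Nat.sub_zero, add_mul, sum_add_distrib, mul_assoc, ← mul_sum]
      ring

theorem sum_Icc_one_sub_eq_sum_range {M : Type*} [AddCommMonoid M] (f : ℕ → ℕ → M) (k : ℕ) :
    ∑ i ∈ Icc 1 k, f (k - i) i = ∑ p ∈ range k, f p (k - p) := by
  refine sum_nbij' (k - ·) (k - ·) ?_ ?_ ?_ ?_ fun i hi => ?_
  any_goals intro i hi; simp only [mem_Icc, mem_range] at hi ⊢; omega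
  rw [Nat.sub_sub_self (mem_Icc.1 hi).2]

theorem moving_average_representation_general
    {Ω : Type*} [MeasurableSpace Ω] (P : Measure Ω)
    (ε : ℕ → ℕ → Ω → ℝ)
    (α β γ : ℝ)
    (X : ℕ → ℕ → Ω → ℝ)
    (hrec : ∀ k ℓ : ℕ, 1 ≤ k → 1 ≤ ℓ → ∀ ω : Ω,
      X k ℓ ω = α * X (k - 1) ℓ ω + β * X k (ℓ - 1) ω + γ * X (k - 1) (ℓ - 1) ω + ε k ℓ ω)
    (hbd1 : ∀ k : ℕ, ∀ ω : Ω, X k 0 ω = 0)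
    (hbd2 : ∀ ℓ : ℕ, ∀ ω : Ω, X 0 ℓ ω = 0) :
    ∀ k ℓ : ℕ, 1 ≤ k → 1 ≤ ℓ →
      ∀ᵐ ω ∂P, X k ℓ ω =
        ∑ i ∈ Finset.Icc 1 k, ∑ j ∈ Finset.Icc 1 ℓ, G (k - i) (ℓ - j) α β γ * ε i j ω := by
  intro k ℓ _ _
  refine Eventually.of_forall fun ω => ?_
  rw [sum_Icc_one_sub_eq_sum_range (fun p i => ∑ j ∈ Icc 1 ℓ, G p (ℓ - j) α β γ * ε i j ω),
    sum_congr rfl fun p _ =>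
      sum_Icc_one_sub_eq_sum_range (fun q j => G p q α β γ * ε (k - p) j ω) ℓ]
  refine eq_sum_kernel_mul_of_rec α β γ (fun m n => G m n α β γ) (fun k ℓ => X k ℓ ω)
    (fun i j => ε i j ω) (by simp [G_zero_right])
    (fun p => by simp [G_zero_right, pow_succ, mul_comm])
    (fun q => by simp [G_zero_left, pow_succ, mul_comm]) (fun p q => G_succ_succ p q α β γ)
    (fun k => hbd1 k ω) (fun ℓ => hbd2 ℓ ω) (fun k ℓ => ?_) k ℓ
  simpa using hrec (k + 1) (ℓ + 1) (by omega) (by omega) ω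

theorem moving_average_representation
    {Ω : Type*} [MeasurableSpace Ω] (P : Measure Ω) [IsProbabilityMeasure P]
    (ε : ℕ → ℕ → Ω → ℝ)
    (hmeas : ∀ k ℓ : ℕ, Measurable (ε k ℓ))
    (hindep : iIndepFun
      (fun p : {p : ℕ × ℕ // 1 ≤ p.1 ∧ 1 ≤ p.2} => ε p.1.1 p.1.2) P)
    (hmean : ∀ k ℓ : ℕ, 1 ≤ k → 1 ≤ ℓ → ∫ ω, ε k ℓ ω ∂P = 0)
    (hvar : ∀ k ℓ : ℕ, 1 ≤ k → 1 ≤ ℓ → variance (ε k ℓ) P = 1)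
    (α β γ : ℝ)
    (X : ℕ → ℕ → Ω → ℝ)
    (hrec : ∀ k ℓ : ℕ, 1 ≤ k → 1 ≤ ℓ → ∀ ω : Ω,
      X k ℓ ω = α * X (k - 1) ℓ ω + β * X k (ℓ - 1) ω + γ * X (k - 1) (ℓ - 1) ω + ε k ℓ ω)
    (hbd1 : ∀ k : ℕ, ∀ ω : Ω, X k 0 ω = 0)
    (hbd2 : ∀ ℓ : ℕ, ∀ ω : Ω, X 0 ℓ ω = 0) :
    ∀ k ℓ : ℕ, 1 ≤ k → 1 ≤ ℓ →
      ∀ᵐ ω ∂P, X k ℓ ω =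
        ∑ i ∈ Finset.Icc 1 k, ∑ j ∈ Finset.Icc 1 ℓ, G (k - i) (ℓ - j) α β γ * ε i j ω :=
  moving_average_representation_general P ε α β γ X hrec hbd1 hbd2
end

section
/- Let m, n be nonnegative integers and let α, β, γ be reals with 0 ≤ α < 1, 0 ≤ β < 1 and αβ + γ > 0. Then G(m,n;α,β,γ) = ((α+γ)/(1−β))^m · P( ξ_n^{(β)} + η_m^{((αβ+γ)/(α+γ))} = n ), where ξ_n^{(β)} and η_m^{((αβ+γ)/(α+γ))} are independent binomial random variables with parameters (n, β) and (m, (αβ+γ)/(α+γ)) respectively (note 0 < (αβ+γ)/(α+γ) ≤ 1 under the hypotheses). -/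
open MeasureTheory ProbabilityTheory Filter

/-- The probability that a binomial random variable with parameters `(n, p)` equals `k`. -/
noncomputable def binomPMF (n : ℕ) (p : ℝ) (k : ℕ) : ℝ :=
  (n.choose k : ℝ) * p ^ k * (1 - p) ^ (n - k)

/-- The probability that the sum of two independent binomial random variables, with
parameters `(n, p)` and `(m, q)` respectively, equals `j`. -/
noncomputable def probSumEq (n : ℕ) (p : ℝ) (m : ℕ) (q : ℝ) (j : ℕ) : ℝ :=
  ∑ i ∈ Finset.range (j + 1), binomPMF n p i * binomPMF m q (j - i)

/-! After rescaling by `((α + γ) / (1 - β)) ^ m`, the `r`-th term of the convolution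
becomes `C(m,r) C(n,r) α^(m-r) β^(n-r) (αβ + γ)^r`. Expanding `(αβ + γ)^r` binomially, the
coefficient of `α^(m-k) β^(n-k) γ^k` is `Σ_r C(m,r) C(n,r) C(r,k)`, which equals
`C(m,k) C(m+n-k,m)` by `C(m,r) C(r,k) = C(m,k) C(m-k,r-k)` and Vandermonde's identity; this is
the trinomial coefficient `(m+n-k)! / ((m-k)! (n-k)! k!)` of `G`. -/

open Finset
open scoped Nat

namespace Nat

theorem sum_range_choose_mul_choose_add (d n k : ℕ) :
    ∑ j ∈ range (d + 1), d.choose j * n.choose (k + j) = (d + n).choose (d + k) := by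
  symm
  rw [add_choose_eq, Finset.Nat.sum_antidiagonal_eq_sum_range_succ (d.choose · * n.choose ·),
    Nat.succ_eq_add_one, show d + k + 1 = (d + 1) + k by omega, sum_range_add]
  have hzero : ∀ j ∈ range k, d.choose (d + 1 + j) * n.choose (d + k - (d + 1 + j)) = 0 :=
    fun j _ => by rw [choose_eq_zero_of_lt (by omega), zero_mul]
  rw [sum_eq_zero hzero, add_zero, ← sum_range_reflect]
  refine sum_congr rfl fun j hj => ?_
  have hj : j ≤ d := Nat.lt_succ_iff.1 (mem_range.1 hj)
  rw [add_tsub_cancel_right, choose_symm hj, show d + k - (d - j) = k + j by omega]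

theorem sum_Icc_choose_mul_choose_mul_choose {m k : ℕ} (n : ℕ) (hk : k ≤ m) :
    ∑ r ∈ Icc k m, m.choose r * n.choose r * r.choose k =
      m.choose k * (m + n - k).choose m := by
  have hterm : ∀ j ∈ range (m + 1 - k),
      m.choose (k + j) * n.choose (k + j) * (k + j).choose k =
        m.choose k * ((m - k).choose j * n.choose (k + j)) := by
    intro j _
    rw [mul_right_comm, choose_mul (by omega), add_tsub_cancel_left]
    ring
  rw [← Ico_add_one_right_eq_Icc, sum_Ico_eq_sum_range, sum_congr rfl hterm, ← mul_sum,
    show m + 1 - k = m - k + 1 by omega, sum_range_choose_mul_choose_add,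
    show m - k + n = m + n - k by omega, Nat.sub_add_cancel hk]

theorem cast_factorial_div_eq_choose_mul_choose {m n k : ℕ} (hkm : k ≤ m) (hkn : k ≤ n) :
    ((m + n - k)! : ℝ) / ((m - k)! * (n - k)! * k !) = m.choose k * (m + n - k).choose m := by
  rw [cast_choose ℝ hkm, cast_choose ℝ (show m ≤ m + n - k by omega),
    show m + n - k - m = n - k by omega]
  field_simp

end Nat

theorem sum_choose_mul_choose_mul_add_pow {R : Type*} [CommSemiring R] (m n : ℕ) (x y z : R) :
    ∑ r ∈ range (min m n + 1), (m.choose r * n.choose r : R) * x ^ (m - r) * y ^ (n - r) *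
        (x * y + z) ^ r =
      ∑ k ∈ range (min m n + 1),
        ((∑ r ∈ Icc k (min m n), m.choose r * n.choose r * r.choose k : ℕ) : R) *
          x ^ (m - k) * y ^ (n - k) * z ^ k := by
  have hexpand : ∀ r ∈ range (min m n + 1),
      (m.choose r * n.choose r : R) * x ^ (m - r) * y ^ (n - r) * (x * y + z) ^ r =
        ∑ k ∈ range (r + 1), ((m.choose r * n.choose r * r.choose k : ℕ) : R) *
          x ^ (m - k) * y ^ (n - k) * z ^ k := by
    intro r hr
    rw [mem_range, Nat.lt_succ_iff, le_min_iff] at hr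
    rw [add_comm, add_pow, mul_sum]
    refine sum_congr rfl fun k hk => ?_
    have hkr : k ≤ r := Nat.lt_succ_iff.1 (mem_range.1 hk)
    rw [show m - k = (m - r) + (r - k) by omega, show n - k = (n - r) + (r - k) by omega,
      pow_add, pow_add, mul_pow]
    push_cast
    ring
  rw [sum_congr rfl hexpand, sum_comm' (t' := range (min m n + 1)) (s' := fun k => Icc k (min m n))]
  · simp only [Nat.cast_sum, sum_mul]
  · intro r k
    simp only [mem_range, mem_Icc]
    omega

theorem G_eq_sum_choose_mul_choose_mul_pow (m n : ℕ) (α β γ : ℝ) :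
    G m n α β γ = ∑ r ∈ range (min m n + 1),
      (m.choose r * n.choose r : ℝ) * α ^ (m - r) * β ^ (n - r) * (α * β + γ) ^ r := by
  rw [sum_choose_mul_choose_mul_add_pow, G]
  refine sum_congr rfl fun k hk => ?_
  rw [mem_range, Nat.lt_succ_iff, le_min_iff] at hk
  have hIcc : ∑ r ∈ Icc k (min m n), m.choose r * n.choose r * r.choose k =
      ∑ r ∈ Icc k m, m.choose r * n.choose r * r.choose k := by
    refine sum_subset (Icc_subset_Icc_right (min_le_left m n)) fun r hr hr' => ?_
    rw [mem_Icc] at hr hr'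
    rw [Nat.choose_eq_zero_of_lt (n := n) (by omega), mul_zero, zero_mul]
  rw [hIcc, Nat.sum_Icc_choose_mul_choose_mul_choose n hk.1,
    Nat.cast_factorial_div_eq_choose_mul_choose hk.1 hk.2, Nat.cast_mul]

theorem probSumEq_self_eq_sum (n : ℕ) (p : ℝ) (m : ℕ) (q : ℝ) :
    probSumEq n p m q n =
      ∑ r ∈ range (min m n + 1), binomPMF n p (n - r) * binomPMF m q r := by
  have hreflect : probSumEq n p m q n =
      ∑ r ∈ range (n + 1), binomPMF n p (n - r) * binomPMF m q r := by
    rw [probSumEq, ← sum_range_reflect]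
    refine sum_congr rfl fun r hr => ?_
    rw [Nat.add_sub_cancel, Nat.sub_sub_self (Nat.lt_succ_iff.1 (mem_range.1 hr))]
  rw [hreflect]
  refine (sum_subset (range_subset_range.2 (Nat.succ_le_succ (min_le_right m n)))
    fun r hr hr' => ?_).symm
  simp only [mem_range, Nat.lt_succ_iff, le_min_iff, not_and_or, not_le] at hr hr'
  rw [binomPMF, binomPMF, Nat.choose_eq_zero_of_lt (n := m) (hr'.resolve_right (by omega))]
  simp

theorem div_pow_mul_binomPMF_mul_binomPMF {m n r : ℕ} (hrm : r ≤ m) (hrn : r ≤ n)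
    {α β γ : ℝ} (hβ : 1 - β ≠ 0) (hαγ : α + γ ≠ 0) :
    ((α + γ) / (1 - β)) ^ m *
        (binomPMF n β (n - r) * binomPMF m ((α * β + γ) / (α + γ)) r) =
      (m.choose r * n.choose r : ℝ) * α ^ (m - r) * β ^ (n - r) * (α * β + γ) ^ r := by
  have hq : 1 - (α * β + γ) / (α + γ) = α * (1 - β) / (α + γ) := by
    field_simp
    ring
  obtain ⟨d, rfl⟩ := Nat.exists_eq_add_of_le hrm
  rw [binomPMF, binomPMF, hq, Nat.choose_symm hrn, Nat.sub_sub_self hrn,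
    Nat.add_sub_cancel_left, div_pow, div_pow, div_pow, mul_pow, pow_add, pow_add]
  field_simp

theorem G_eq_binom_prob_first_general (m n : ℕ) (α β γ : ℝ)
    (hα0 : 0 ≤ α) (hβ1 : β < 1) (hγ : 0 < α * β + γ) :
    G m n α β γ =
      ((α + γ) / (1 - β)) ^ m * probSumEq n β m ((α * β + γ) / (α + γ)) n := by
  have hβ : 1 - β ≠ 0 := (sub_pos.2 hβ1).ne'
  have hαγ : α + γ ≠ 0 := by nlinarith [mul_nonneg hα0 (sub_pos.2 hβ1).le]
  rw [G_eq_sum_choose_mul_choose_mul_pow, probSumEq_self_eq_sum, mul_sum]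
  refine sum_congr rfl fun r hr => ?_
  rw [mem_range, Nat.lt_succ_iff, le_min_iff] at hr
  exact (div_pow_mul_binomPMF_mul_binomPMF hr.1 hr.2 hβ hαγ).symm

theorem G_eq_binom_prob_first (m n : ℕ) (α β γ : ℝ)
    (hα0 : 0 ≤ α) (hα1 : α < 1) (hβ0 : 0 ≤ β) (hβ1 : β < 1) (hγ : 0 < α * β + γ) :
    G m n α β γ =
      ((α + γ) / (1 - β)) ^ m * probSumEq n β m ((α * β + γ) / (α + γ)) n :=
  G_eq_binom_prob_first_general m n α β γ hα0 hβ1 hγ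
end

section
/- If the real parameters satisfy |α| + |β| + |γ| < 1, then for all integers k₁, ℓ₁, k₂, ℓ₂ ≥ 1: |Cov(X_{k₁,ℓ₁}, X_{k₂,ℓ₂})| ≤ (|α|+|β|+|γ|)^{(|k₁−k₂|+|ℓ₁−ℓ₂|)/2} / (1 − (|α|+|β|+|γ|))². -/
/-!
Unrolling the recursion writes `X_{k,ℓ}` as a finite moving average
`∑ c_{i,j} ε_{k-i,ℓ-j}` whose weights satisfy the same recursion, so `|c_{i,j}| ≤ ρ^{(i+j)/2}`
with `ρ = |α| + |β| + |γ|`. Since the innovations are uncorrelated with unit variance, the covariance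
of two such averages is the sum of products of the weights of the shared innovations; every such
product carries the factor `ρ^{(|k₁-k₂|+|ℓ₁-ℓ₂|)/2}`, and what remains is a product of two geometric
series in `ρ`.
-/

open MeasureTheory ProbabilityTheory Finset

/-- The covariance of two real random variables. -/
noncomputable def cov {Ω : Type*} [MeasurableSpace Ω] (P : Measure Ω) (X Y : Ω → ℝ) : ℝ :=
  ∫ ω, (X ω - ∫ x, X x ∂P) * (Y ω - ∫ x, Y x ∂P) ∂P

section Covariance

variable {Ω ι : Type*} [MeasurableSpace Ω] {μ : Measure Ω} {ξ : ι → Ω → ℝ}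

theorem covariance_eq_ite_of_iIndepFun [IsProbabilityMeasure μ] [DecidableEq ι]
    (hL2 : ∀ i, MemLp (ξ i) 2 μ) (hindep : iIndepFun ξ μ) (hvar : ∀ i, Var[ξ i; μ] = 1)
    (i j : ι) : cov[ξ i, ξ j; μ] = if i = j then 1 else 0 := by
  split_ifs with hij
  · rw [hij, covariance_self (hL2 j).aestronglyMeasurable.aemeasurable, hvar]
  · exact (hindep.indepFun hij).covariance_eq_zero (hL2 i) (hL2 j)

theorem covariance_sum_mul_sum_mul_of_orthonormal [IsFiniteMeasure μ] [DecidableEq ι]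
    (hL2 : ∀ i, MemLp (ξ i) 2 μ) (horth : ∀ i j, cov[ξ i, ξ j; μ] = if i = j then 1 else 0)
    (s t : Finset ι) (a b : ι → ℝ) :
    cov[fun ω => ∑ i ∈ s, a i * ξ i ω, fun ω => ∑ j ∈ t, b j * ξ j ω; μ]
      = ∑ i ∈ s ∩ t, a i * b i := by
  rw [covariance_fun_sum_fun_sum' (X := fun i ω => a i * ξ i ω) (Y := fun j ω => b j * ξ j ω)
    (fun i _ => (hL2 i).const_mul (a i)) (fun j _ => (hL2 j).const_mul (b j))]
  simp only [covariance_const_mul_left, covariance_const_mul_right, horth, mul_ite, mul_one,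
    mul_zero, sum_ite_eq, ← sum_filter, filter_mem_eq_inter]
  exact sum_congr rfl fun i _ => mul_comm _ _

end Covariance

namespace SpatialAR

/-- `coeff α β γ i j` is the weight of `ε_{k-i,ℓ-j}` in `X_{k,ℓ}` (for `i < k`, `j < ℓ`). -/
def coeff (α β γ : ℝ) : ℕ → ℕ → ℝ
  | 0, 0 => 1
  | 0, j + 1 => β * coeff α β γ 0 j
  | i + 1, 0 => α * coeff α β γ i 0
  | i + 1, j + 1 => α * coeff α β γ i (j + 1) + β * coeff α β γ (i + 1) j + γ * coeff α β γ i j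

theorem abs_coeff_le_pow {α β γ r : ℝ} (hr0 : 0 ≤ r) (hr1 : r ≤ 1)
    (h : |α| + |β| + |γ| ≤ r ^ 2) : ∀ i j, |coeff α β γ i j| ≤ r ^ (i + j)
  | 0, 0 => by simp [coeff]
  | 0, j + 1 => by
    have ih := abs_coeff_le_pow hr0 hr1 h 0 j
    have hβ : |β| ≤ r := by nlinarith [abs_nonneg α, abs_nonneg γ]
    calc |coeff α β γ 0 (j + 1)| = |β| * |coeff α β γ 0 j| := by rw [coeff, abs_mul]
      _ ≤ r * r ^ (0 + j) := by gcongr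
      _ = r ^ (0 + (j + 1)) := by ring
  | i + 1, 0 => by
    have ih := abs_coeff_le_pow hr0 hr1 h i 0
    have hα : |α| ≤ r := by nlinarith [abs_nonneg β, abs_nonneg γ]
    calc |coeff α β γ (i + 1) 0| = |α| * |coeff α β γ i 0| := by rw [coeff, abs_mul]
      _ ≤ r * r ^ (i + 0) := by gcongr
      _ = r ^ (i + 1 + 0) := by ring
  | i + 1, j + 1 => by
    have ih₁ := abs_coeff_le_pow hr0 hr1 h i (j + 1)
    have ih₂ := abs_coeff_le_pow hr0 hr1 h (i + 1) j
    have ih₃ := abs_coeff_le_pow hr0 hr1 h i j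
    have hstep : r ^ (i + j + 1) ≤ r ^ (i + j) := pow_le_pow_of_le_one hr0 hr1 (by omega)
    calc |coeff α β γ (i + 1) (j + 1)|
        ≤ |α| * |coeff α β γ i (j + 1)| + |β| * |coeff α β γ (i + 1) j|
            + |γ| * |coeff α β γ i j| := by
          rw [coeff, ← abs_mul, ← abs_mul, ← abs_mul]
          exact abs_add_three _ _ _
      _ ≤ |α| * r ^ (i + j) + |β| * r ^ (i + j) + |γ| * r ^ (i + j) := by
          rw [show i + (j + 1) = i + j + 1 by omega] at ih₁
          rw [show i + 1 + j = i + j + 1 by omega] at ih₂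
          gcongr
          exacts [ih₁.trans hstep, ih₂.trans hstep]
      _ ≤ r ^ 2 * r ^ (i + j) := by
          rw [← add_mul, ← add_mul]; gcongr
      _ = r ^ (i + 1 + (j + 1)) := by ring

section Representation

variable {Ω : Type*} {α β γ : ℝ} {ε X : ℕ → ℕ → Ω → ℝ}
  (hrec : ∀ k ℓ : ℕ, 1 ≤ k → 1 ≤ ℓ → ∀ ω : Ω,
    X k ℓ ω = α * X (k - 1) ℓ ω + β * X k (ℓ - 1) ω + γ * X (k - 1) (ℓ - 1) ω + ε k ℓ ω)
  (hbd1 : ∀ k : ℕ, ∀ ω : Ω, X k 0 ω = 0)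
  (hbd2 : ∀ ℓ : ℕ, ∀ ω : Ω, X 0 ℓ ω = 0)
include hrec hbd1 hbd2

theorem eq_sum_coeff_mul :
    ∀ k ℓ ω, X k ℓ ω = ∑ i ∈ range k, ∑ j ∈ range ℓ, coeff α β γ i j * ε (k - i) (ℓ - j) ω
  | 0, ℓ, ω => by simp [hbd2]
  | k + 1, 0, ω => by simp [hbd1]
  | k + 1, ℓ + 1, ω => by
    rw [hrec (k + 1) (ℓ + 1) (by omega) (by omega) ω]
    simp only [Nat.add_sub_cancel]
    rw [eq_sum_coeff_mul k (ℓ + 1) ω, eq_sum_coeff_mul (k + 1) ℓ ω, eq_sum_coeff_mul k ℓ ω]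
    simp only [sum_range_succ', Nat.add_sub_add_right, Nat.sub_zero, coeff]
    simp only [mul_sum, sum_add_distrib, add_mul, mul_add, one_mul, mul_assoc]
    ring

theorem eq_sum_coeff_mul_reflect (k ℓ : ℕ) :
    X k ℓ = fun ω => ∑ p ∈ range k ×ˢ range ℓ,
      coeff α β γ (k - 1 - p.1) (ℓ - 1 - p.2) * ε (p.1 + 1) (p.2 + 1) ω := by
  funext ω
  rw [eq_sum_coeff_mul hrec hbd1 hbd2, sum_product, ← sum_range_reflect]
  refine sum_congr rfl fun i hi => ?_
  rw [← sum_range_reflect]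
  refine sum_congr rfl fun j hj => ?_
  rw [mem_range] at hi hj
  rw [show k - (k - 1 - i) = i + 1 by omega, show ℓ - (ℓ - 1 - j) = j + 1 by omega]

theorem cov_eq_sum_coeff_mul_coeff [MeasurableSpace Ω] {P : Measure Ω} [IsFiniteMeasure P]
    (hL2 : ∀ p : ℕ × ℕ, MemLp (ε (p.1 + 1) (p.2 + 1)) 2 P)
    (horth : ∀ p q : ℕ × ℕ,
      cov[ε (p.1 + 1) (p.2 + 1), ε (q.1 + 1) (q.2 + 1); P] = if p = q then 1 else 0)
    (k₁ ℓ₁ k₂ ℓ₂ : ℕ) :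
    cov P (X k₁ ℓ₁) (X k₂ ℓ₂) = ∑ p ∈ range (min k₁ k₂) ×ˢ range (min ℓ₁ ℓ₂),
      coeff α β γ (k₁ - 1 - p.1) (ℓ₁ - 1 - p.2) * coeff α β γ (k₂ - 1 - p.1) (ℓ₂ - 1 - p.2) := by
  rw [show cov P (X k₁ ℓ₁) (X k₂ ℓ₂) = cov[X k₁ ℓ₁, X k₂ ℓ₂; P] from rfl,
    eq_sum_coeff_mul_reflect hrec hbd1 hbd2, eq_sum_coeff_mul_reflect hrec hbd1 hbd2,
    covariance_sum_mul_sum_mul_of_orthonormal hL2 horth, product_inter_product,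
    range_inter_range, range_inter_range]

end Representation

theorem iIndepFun_succ_succ {Ω : Type*} [MeasurableSpace Ω] {P : Measure Ω}
    {ε : ℕ → ℕ → Ω → ℝ}
    (h : iIndepFun (fun p : {p : ℕ × ℕ // 1 ≤ p.1 ∧ 1 ≤ p.2} => ε p.1.1 p.1.2) P) :
    iIndepFun (fun p : ℕ × ℕ => ε (p.1 + 1) (p.2 + 1)) P := by
  have hinj : Function.Injective fun p : ℕ × ℕ =>
      (⟨(p.1 + 1, p.2 + 1), by omega, by omega⟩ : {p : ℕ × ℕ // 1 ≤ p.1 ∧ 1 ≤ p.2}) :=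
    fun p q hpq => by
      simp only [Subtype.mk.injEq, Prod.mk.injEq, add_left_inj] at hpq
      exact Prod.ext hpq.1 hpq.2
  exact h.precomp hinj

theorem sum_range_min_pow_le {r : ℝ} (hr0 : 0 ≤ r) (hr1 : r ^ 2 < 1) (k₁ k₂ : ℕ) :
    ∑ u ∈ range (min k₁ k₂), r ^ ((k₁ - 1 - u) + (k₂ - 1 - u))
      ≤ r ^ ((k₁ : ℤ) - k₂).natAbs / (1 - r ^ 2) := by
  set K := min k₁ k₂
  calc ∑ u ∈ range K, r ^ ((k₁ - 1 - u) + (k₂ - 1 - u))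
      = ∑ u ∈ range K, r ^ ((k₁ : ℤ) - k₂).natAbs * (r ^ 2) ^ (K - 1 - u) :=
        sum_congr rfl fun u hu => by
          rw [mem_range] at hu
          rw [← pow_mul, ← pow_add]
          congr 1
          omega
    _ = r ^ ((k₁ : ℤ) - k₂).natAbs * ∑ u ∈ Ico 0 K, (r ^ 2) ^ u := by
        rw [← mul_sum, sum_range_reflect (fun u => (r ^ 2) ^ u), range_eq_Ico]
    _ ≤ r ^ ((k₁ : ℤ) - k₂).natAbs * ((r ^ 2) ^ 0 / (1 - r ^ 2)) := by
        gcongr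
        exact geom_sum_Ico_le_of_lt_one (by positivity) hr1
    _ = r ^ ((k₁ : ℤ) - k₂).natAbs / (1 - r ^ 2) := by ring

theorem abs_sum_range_min_mul_le {c : ℕ → ℕ → ℝ} {r : ℝ} (hr0 : 0 ≤ r) (hr1 : r ^ 2 < 1)
    (hc : ∀ i j, |c i j| ≤ r ^ (i + j)) (k₁ ℓ₁ k₂ ℓ₂ : ℕ) :
    |∑ p ∈ range (min k₁ k₂) ×ˢ range (min ℓ₁ ℓ₂),
        c (k₁ - 1 - p.1) (ℓ₁ - 1 - p.2) * c (k₂ - 1 - p.1) (ℓ₂ - 1 - p.2)|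
      ≤ r ^ (((k₁ : ℤ) - k₂).natAbs + ((ℓ₁ : ℤ) - ℓ₂).natAbs) / (1 - r ^ 2) ^ 2 := by
  calc _ ≤ ∑ p ∈ range (min k₁ k₂) ×ˢ range (min ℓ₁ ℓ₂),
          r ^ ((k₁ - 1 - p.1) + (k₂ - 1 - p.1)) * r ^ ((ℓ₁ - 1 - p.2) + (ℓ₂ - 1 - p.2)) := by
        refine (abs_sum_le_sum_abs _ _).trans (sum_le_sum fun p _ => ?_)
        rw [abs_mul]
        exact (mul_le_mul (hc _ _) (hc _ _) (abs_nonneg _) (by positivity)).trans_eq (by ring)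
    _ = (∑ u ∈ range (min k₁ k₂), r ^ ((k₁ - 1 - u) + (k₂ - 1 - u)))
          * ∑ v ∈ range (min ℓ₁ ℓ₂), r ^ ((ℓ₁ - 1 - v) + (ℓ₂ - 1 - v)) := by
        rw [sum_mul_sum, sum_product]
    _ ≤ (r ^ ((k₁ : ℤ) - k₂).natAbs / (1 - r ^ 2)) * (r ^ ((ℓ₁ : ℤ) - ℓ₂).natAbs / (1 - r ^ 2)) :=
        mul_le_mul (sum_range_min_pow_le hr0 hr1 k₁ k₂) (sum_range_min_pow_le hr0 hr1 ℓ₁ ℓ₂)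
          (sum_nonneg fun _ _ => by positivity) (by positivity)
    _ = _ := by rw [pow_add, div_mul_div_comm, sq (1 - r ^ 2)]

end SpatialAR

open SpatialAR in
theorem cov_bound_stable_general
    {Ω : Type*} [MeasurableSpace Ω] (P : Measure Ω) [IsProbabilityMeasure P]
    (ε : ℕ → ℕ → Ω → ℝ)
    (hmeas : ∀ k ℓ : ℕ, Measurable (ε k ℓ))
    (hindep : iIndepFun
      (fun p : {p : ℕ × ℕ // 1 ≤ p.1 ∧ 1 ≤ p.2} => ε p.1.1 p.1.2) P)
    (hvar : ∀ k ℓ : ℕ, 1 ≤ k → 1 ≤ ℓ → variance (ε k ℓ) P = 1)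
    (α β γ : ℝ)
    (X : ℕ → ℕ → Ω → ℝ)
    (hrec : ∀ k ℓ : ℕ, 1 ≤ k → 1 ≤ ℓ → ∀ ω : Ω,
      X k ℓ ω = α * X (k - 1) ℓ ω + β * X k (ℓ - 1) ω + γ * X (k - 1) (ℓ - 1) ω + ε k ℓ ω)
    (hbd1 : ∀ k : ℕ, ∀ ω : Ω, X k 0 ω = 0)
    (hbd2 : ∀ ℓ : ℕ, ∀ ω : Ω, X 0 ℓ ω = 0)
    (hpar : |α| + |β| + |γ| < 1) :
    ∀ k₁ ℓ₁ k₂ ℓ₂ : ℕ, 1 ≤ k₁ → 1 ≤ ℓ₁ → 1 ≤ k₂ → 1 ≤ ℓ₂ →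
      |cov P (X k₁ ℓ₁) (X k₂ ℓ₂)| ≤
        (|α| + |β| + |γ|) ^
            (((((k₁ : ℤ) - k₂).natAbs + ((ℓ₁ : ℤ) - ℓ₂).natAbs : ℕ) : ℝ) / 2) /
          (1 - (|α| + |β| + |γ|)) ^ 2 := by
  intro k₁ ℓ₁ k₂ ℓ₂ _ _ _ _
  have hL2 : ∀ p : ℕ × ℕ, MemLp (ε (p.1 + 1) (p.2 + 1)) 2 P := fun p =>
    memLp_two_of_variance_ne_zero (hmeas _ _).aestronglyMeasurable (by simp [hvar])
  have horth := covariance_eq_ite_of_iIndepFun hL2 (iIndepFun_succ_succ hindep)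
    fun p => hvar _ _ (by omega) (by omega)
  set ρ := |α| + |β| + |γ|
  have hρ : 0 ≤ ρ := by positivity
  have hcoeff := abs_coeff_le_pow (Real.sqrt_nonneg ρ) (Real.sqrt_le_one.mpr hpar.le)
    (Real.sq_sqrt hρ).ge
  have hbound := abs_sum_range_min_mul_le (Real.sqrt_nonneg ρ) (by rwa [Real.sq_sqrt hρ])
    hcoeff k₁ ℓ₁ k₂ ℓ₂
  rw [cov_eq_sum_coeff_mul_coeff hrec hbd1 hbd2 hL2 horth, Real.rpow_div_two_eq_sqrt _ hρ,
    Real.rpow_natCast]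
  rwa [Real.sq_sqrt hρ] at hbound

theorem cov_bound_stable
    {Ω : Type*} [MeasurableSpace Ω] (P : Measure Ω) [IsProbabilityMeasure P]
    (ε : ℕ → ℕ → Ω → ℝ)
    (hmeas : ∀ k ℓ : ℕ, Measurable (ε k ℓ))
    (hindep : iIndepFun
      (fun p : {p : ℕ × ℕ // 1 ≤ p.1 ∧ 1 ≤ p.2} => ε p.1.1 p.1.2) P)
    (hmean : ∀ k ℓ : ℕ, 1 ≤ k → 1 ≤ ℓ → ∫ ω, ε k ℓ ω ∂P = 0)
    (hvar : ∀ k ℓ : ℕ, 1 ≤ k → 1 ≤ ℓ → variance (ε k ℓ) P = 1)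
    (α β γ : ℝ)
    (X : ℕ → ℕ → Ω → ℝ)
    (hrec : ∀ k ℓ : ℕ, 1 ≤ k → 1 ≤ ℓ → ∀ ω : Ω,
      X k ℓ ω = α * X (k - 1) ℓ ω + β * X k (ℓ - 1) ω + γ * X (k - 1) (ℓ - 1) ω + ε k ℓ ω)
    (hbd1 : ∀ k : ℕ, ∀ ω : Ω, X k 0 ω = 0)
    (hbd2 : ∀ ℓ : ℕ, ∀ ω : Ω, X 0 ℓ ω = 0)
    (hpar : |α| + |β| + |γ| < 1) :
    ∀ k₁ ℓ₁ k₂ ℓ₂ : ℕ, 1 ≤ k₁ → 1 ≤ ℓ₁ → 1 ≤ k₂ → 1 ≤ ℓ₂ →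
      |cov P (X k₁ ℓ₁) (X k₂ ℓ₂)| ≤
        (|α| + |β| + |γ|) ^
            (((((k₁ : ℤ) - k₂).natAbs + ((ℓ₁ : ℤ) - ℓ₂).natAbs : ℕ) : ℝ) / 2) /
          (1 - (|α| + |β| + |γ|)) ^ 2 :=
  cov_bound_stable_general P ε hmeas hindep hvar α β γ X hrec hbd1 hbd2 hpar
end

section
/- Suppose the real parameters satisfy αβγ ≤ 0, |α| = 1 and |β| = |γ| < 1. Then for all integers k₁, ℓ₁, k₂, ℓ₂ ≥ 1: |Cov(X_{k₁,ℓ₁}, X_{k₂,ℓ₂})| ≤ min(k₁,k₂) · |γ|^{|ℓ₁−ℓ₂|} / (1 − γ²). -/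
/-!
The sign condition together with `|α| = 1` and `|β| = |γ|` forces `γ = -αβ`, so the recursion
factors as `(1 - α B₁)(1 - β B₂) X = ε` for the backward shifts `B₁, B₂`, and inverting both
factors gives `X k ℓ = ∑_{i ≤ k, j ≤ ℓ} α^(k-i) β^(ℓ-j) ε i j`. The noise is orthonormal, so the
covariance of two such sums is the sum of products of coefficients over the common rectangle
`[1, min k₁ k₂] × [1, min ℓ₁ ℓ₂]`. There each term has absolute value
`|γ|^|ℓ₁ - ℓ₂| (γ²)^(min ℓ₁ ℓ₂ - j)`, and the geometric series in `j` is at most `1 / (1 - γ²)`.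
-/

open MeasureTheory ProbabilityTheory Filter

open Finset

theorem eq_neg_mul_of_mul_mul_nonpos {a b c : ℝ} (h : a * b * c ≤ 0) (ha : |a| = 1)
    (hbc : |b| = |c|) : c = -(a * b) := by
  have : |c| = |a * b| := by rw [abs_mul, ha, one_mul, hbc]
  rcases abs_eq_abs.mp this with hc | hc
  · have : a * b = 0 := by nlinarith [mul_self_nonneg (a * b)]
    rw [hc, this, neg_zero]
  · exact hc

section WhiteNoise

variable {Ω ι : Type*} [MeasurableSpace Ω] {P : Measure Ω} {e : ι → Ω → ℝ}

theorem cov_eq_integral_mul {X Y : Ω → ℝ} (hX : ∫ ω, X ω ∂P = 0) (hY : ∫ ω, Y ω ∂P = 0) :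
    cov P X Y = ∫ ω, X ω * Y ω ∂P := by
  simp [cov, hX, hY]

variable [IsProbabilityMeasure P]

theorem integral_mul_eq_ite_of_iIndepFun [DecidableEq ι] (hind : iIndepFun e P)
    (hmeas : ∀ i, AEStronglyMeasurable (e i) P) (hmean : ∀ i, ∫ ω, e i ω ∂P = 0)
    (hvar : ∀ i, variance (e i) P = 1) (i j : ι) :
    ∫ ω, e i ω * e j ω ∂P = if i = j then 1 else 0 := by
  split_ifs with hij
  · subst hij
    have := variance_eq_sub (memLp_two_of_variance_ne_zero (hmeas i) (by simp [hvar]))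
    simpa [hvar, hmean, sq] using this.symm
  · simpa [hmean] using (hind.indepFun hij).integral_mul_eq_mul_integral (hmeas i) (hmeas j)

theorem cov_sum_mul_sum_of_iIndepFun [DecidableEq ι] (hind : iIndepFun e P)
    (hmeas : ∀ i, AEStronglyMeasurable (e i) P) (hmean : ∀ i, ∫ ω, e i ω ∂P = 0)
    (hvar : ∀ i, variance (e i) P = 1) (s t : Finset ι) (a b : ι → ℝ) :
    cov P (fun ω => ∑ i ∈ s, a i * e i ω) (fun ω => ∑ j ∈ t, b j * e j ω) =
      ∑ i ∈ s ∩ t, a i * b i := by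
  have hL2 (i : ι) : MemLp (e i) 2 P := memLp_two_of_variance_ne_zero (hmeas i) (by simp [hvar])
  have hcentered (u : Finset ι) (c : ι → ℝ) : ∫ ω, ∑ i ∈ u, c i * e i ω ∂P = 0 := by
    rw [integral_finsetSum _ fun i _ => ((hL2 i).integrable one_le_two).const_mul _]
    simp [integral_const_mul, hmean]
  have hint (i j : ι) : Integrable (fun ω => a i * e i ω * (b j * e j ω)) P := by
    refine (((hL2 i).integrable_mul (hL2 j)).const_mul (a i * b j)).congr ?_
    exact Eventually.of_forall fun ω => by simp only [Pi.mul_apply]; ring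
  have hterm (i j : ι) :
      ∫ ω, a i * e i ω * (b j * e j ω) ∂P = if i = j then a i * b j else 0 := by
    have hfun : (fun ω => a i * e i ω * (b j * e j ω)) = fun ω => a i * b j * (e i ω * e j ω) :=
      funext fun ω => mul_mul_mul_comm _ _ _ _
    rw [hfun, integral_const_mul, integral_mul_eq_ite_of_iIndepFun hind hmeas hmean hvar]
    simp
  rw [cov_eq_integral_mul (hcentered s a) (hcentered t b)]
  simp_rw [sum_mul_sum]
  rw [integral_finsetSum _ fun i _ => integrable_finsetSum _ fun j _ => hint i j]
  simp_rw [integral_finsetSum _ fun j _ => hint _ j, hterm, sum_ite_eq, sum_ite_mem]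

end WhiteNoise

theorem eq_sum_Icc_pow_mul_of_recurrence {R : Type*} [CommSemiring R] {u f : ℕ → R} {c : R}
    (h0 : u 0 = 0) (hsucc : ∀ n, u (n + 1) = c * u n + f (n + 1)) (n : ℕ) :
    u n = ∑ i ∈ Icc 1 n, c ^ (n - i) * f i := by
  induction n with
  | zero => simp [h0]
  | succ n ih =>
    rw [hsucc, ih, sum_Icc_succ_top (by omega), mul_sum, Nat.sub_self, pow_zero, one_mul]
    congr 1
    refine sum_congr rfl fun i hi => ?_
    rw [Nat.sub_add_comm (mem_Icc.mp hi).2, pow_succ]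
    ring

theorem eq_sum_Icc_Icc_of_factored_recurrence {R : Type*} [CommRing R] {x e : ℕ → ℕ → R}
    {a b : R} (hx0 : ∀ k, x k 0 = 0) (h0x : ∀ ℓ, x 0 ℓ = 0)
    (hrec : ∀ k ℓ, x (k + 1) (ℓ + 1) =
      a * x k (ℓ + 1) + b * x (k + 1) ℓ - a * b * x k ℓ + e (k + 1) (ℓ + 1))
    (k ℓ : ℕ) :
    x k ℓ = ∑ i ∈ Icc 1 k, ∑ j ∈ Icc 1 ℓ, a ^ (k - i) * b ^ (ℓ - j) * e i j := by
  -- `x k (ℓ + 1) - b * x k ℓ` solves a recurrence in `k` alone: this inverts `1 - a B₁`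
  have hrow : ∀ ℓ k, x k (ℓ + 1) - b * x k ℓ = ∑ i ∈ Icc 1 k, a ^ (k - i) * e i (ℓ + 1) :=
    fun ℓ => eq_sum_Icc_pow_mul_of_recurrence (by simp [h0x]) fun k => by rw [hrec]; ring
  have hcol := eq_sum_Icc_pow_mul_of_recurrence (u := x k) (c := b)
    (f := fun j => ∑ i ∈ Icc 1 k, a ^ (k - i) * e i j) (hx0 k)
    (fun ℓ => by linear_combination hrow ℓ k) ℓ
  rw [hcol, sum_comm]
  simp_rw [mul_sum]
  exact sum_congr rfl fun i _ => sum_congr rfl fun j _ => by ring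

theorem sum_Icc_pow_sub_le_inv {q : ℝ} (h0 : 0 ≤ q) (h1 : q < 1) (m : ℕ) :
    ∑ j ∈ Icc 1 m, q ^ (m - j) ≤ (1 - q)⁻¹ := by
  rw [← Ico_add_one_right_eq_Icc, sum_Ico_reflect _ _ le_rfl]
  simpa using geom_sum_Ico_le_of_lt_one (m := 0) (n := m) h0 h1

theorem abs_sum_pow_mul_pow_le {a b : ℝ} (ha : |a| = 1) (hb : |b| < 1) (k₁ ℓ₁ k₂ ℓ₂ : ℕ) :
    |∑ i ∈ Icc 1 (min k₁ k₂), ∑ j ∈ Icc 1 (min ℓ₁ ℓ₂),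
        a ^ (k₁ - i) * b ^ (ℓ₁ - j) * (a ^ (k₂ - i) * b ^ (ℓ₂ - j))| ≤
      (min k₁ k₂ : ℕ) * |b| ^ ((ℓ₁ : ℤ) - ℓ₂).natAbs / (1 - b ^ 2) := by
  set d := ((ℓ₁ : ℤ) - ℓ₂).natAbs
  have hterm : ∀ j ∈ Icc 1 (min ℓ₁ ℓ₂), ∀ i : ℕ,
      |a ^ (k₁ - i) * b ^ (ℓ₁ - j) * (a ^ (k₂ - i) * b ^ (ℓ₂ - j))| =
        |b| ^ d * (b ^ 2) ^ (min ℓ₁ ℓ₂ - j) := by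
    intro j hj i
    have hexp : (ℓ₁ - j) + (ℓ₂ - j) = d + 2 * (min ℓ₁ ℓ₂ - j) := by
      have := (mem_Icc.mp hj).2
      omega
    rw [abs_mul, abs_mul, abs_mul, abs_pow, abs_pow, abs_pow, abs_pow, ha, one_pow, one_pow,
      one_mul, one_mul, ← pow_add, hexp, pow_add, pow_mul, sq_abs]
  have hb2 : b ^ 2 < 1 := by nlinarith [abs_nonneg b, sq_abs b]
  calc _ ≤ ∑ i ∈ Icc 1 (min k₁ k₂), ∑ j ∈ Icc 1 (min ℓ₁ ℓ₂),
          |a ^ (k₁ - i) * b ^ (ℓ₁ - j) * (a ^ (k₂ - i) * b ^ (ℓ₂ - j))| :=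
        (abs_sum_le_sum_abs _ _).trans (sum_le_sum fun i _ => abs_sum_le_sum_abs _ _)
    _ = (min k₁ k₂ : ℕ) * (|b| ^ d * ∑ j ∈ Icc 1 (min ℓ₁ ℓ₂), (b ^ 2) ^ (min ℓ₁ ℓ₂ - j)) := by
        simp_rw [fun i => sum_congr rfl fun j hj => hterm j hj i, ← mul_sum]
        simp only [sum_const, Nat.card_Icc, Nat.add_sub_cancel, nsmul_eq_mul]
        ring
    _ ≤ (min k₁ k₂ : ℕ) * (|b| ^ d * (1 - b ^ 2)⁻¹) := by
        gcongr
        exact sum_Icc_pow_sub_le_inv (sq_nonneg b) hb2 _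
    _ = _ := by ring

def latticeRect (k ℓ : ℕ) : Finset {p : ℕ × ℕ // 1 ≤ p.1 ∧ 1 ≤ p.2} :=
  (Icc 1 k ×ˢ Icc 1 ℓ).subtype _

theorem sum_latticeRect {M : Type*} [AddCommMonoid M] (f : ℕ → ℕ → M) (k ℓ : ℕ) :
    ∑ p ∈ latticeRect k ℓ, f p.1.1 p.1.2 = ∑ i ∈ Icc 1 k, ∑ j ∈ Icc 1 ℓ, f i j := by
  rw [latticeRect, sum_subtype_of_mem (fun p : ℕ × ℕ => f p.1 p.2)
    fun p hp => by simp only [mem_product, mem_Icc] at hp; omega, sum_product]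

theorem latticeRect_inter_latticeRect (k₁ ℓ₁ k₂ ℓ₂ : ℕ) :
    latticeRect k₁ ℓ₁ ∩ latticeRect k₂ ℓ₂ = latticeRect (min k₁ k₂) (min ℓ₁ ℓ₂) := by
  ext p
  simp only [latticeRect, mem_inter, mem_subtype, mem_product, mem_Icc]
  omega

theorem cov_bound_edge_alpha
    {Ω : Type*} [MeasurableSpace Ω] (P : Measure Ω) [IsProbabilityMeasure P]
    (ε : ℕ → ℕ → Ω → ℝ)
    (hmeas : ∀ k ℓ : ℕ, Measurable (ε k ℓ))
    (hindep : iIndepFun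
      (fun p : {p : ℕ × ℕ // 1 ≤ p.1 ∧ 1 ≤ p.2} => ε p.1.1 p.1.2) P)
    (hmean : ∀ k ℓ : ℕ, 1 ≤ k → 1 ≤ ℓ → ∫ ω, ε k ℓ ω ∂P = 0)
    (hvar : ∀ k ℓ : ℕ, 1 ≤ k → 1 ≤ ℓ → variance (ε k ℓ) P = 1)
    (α β γ : ℝ)
    (X : ℕ → ℕ → Ω → ℝ)
    (hrec : ∀ k ℓ : ℕ, 1 ≤ k → 1 ≤ ℓ → ∀ ω : Ω,
      X k ℓ ω = α * X (k - 1) ℓ ω + β * X k (ℓ - 1) ω + γ * X (k - 1) (ℓ - 1) ω + ε k ℓ ω)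
    (hbd1 : ∀ k : ℕ, ∀ ω : Ω, X k 0 ω = 0)
    (hbd2 : ∀ ℓ : ℕ, ∀ ω : Ω, X 0 ℓ ω = 0)
    (hsign : α * β * γ ≤ 0) (hα : |α| = 1) (hβγ : |β| = |γ|) (hγ : |γ| < 1) :
    ∀ k₁ ℓ₁ k₂ ℓ₂ : ℕ, 1 ≤ k₁ → 1 ≤ ℓ₁ → 1 ≤ k₂ → 1 ≤ ℓ₂ →
      |cov P (X k₁ ℓ₁) (X k₂ ℓ₂)| ≤
        ((min k₁ k₂ : ℕ) : ℝ) * |γ| ^ ((ℓ₁ : ℤ) - ℓ₂).natAbs / (1 - γ ^ 2) := by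
  intro k₁ ℓ₁ k₂ ℓ₂ _ _ _ _
  have hγαβ := eq_neg_mul_of_mul_mul_nonpos hsign hα hβγ
  have hX (k ℓ : ℕ) : X k ℓ = fun ω => ∑ p ∈ latticeRect k ℓ,
      α ^ (k - p.1.1) * β ^ (ℓ - p.1.2) * ε p.1.1 p.1.2 ω := by
    funext ω
    rw [sum_latticeRect fun i j => α ^ (k - i) * β ^ (ℓ - j) * ε i j ω]
    refine eq_sum_Icc_Icc_of_factored_recurrence (x := fun k ℓ => X k ℓ ω)
      (e := fun i j => ε i j ω) (fun k => hbd1 k ω) (fun ℓ => hbd2 ℓ ω) (fun k ℓ => ?_) k ℓ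
    rw [hrec (k + 1) (ℓ + 1) (by omega) (by omega), hγαβ]
    simp only [Nat.add_sub_cancel]
    ring
  rw [hX, hX, cov_sum_mul_sum_of_iIndepFun hindep (fun p => (hmeas _ _).aestronglyMeasurable)
    (fun p => hmean _ _ p.2.1 p.2.2) (fun p => hvar _ _ p.2.1 p.2.2),
    latticeRect_inter_latticeRect,
    sum_latticeRect fun i j => α ^ (k₁ - i) * β ^ (ℓ₁ - j) * (α ^ (k₂ - i) * β ^ (ℓ₂ - j)),
    ← sq_abs γ, ← hβγ, sq_abs]
  exact abs_sum_pow_mul_pow_le hα (hβγ ▸ hγ) k₁ ℓ₁ k₂ ℓ₂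
end

section
/- Suppose the real parameters satisfy αβγ = −1 and |α| = |β| = |γ| = 1. Then for all integers k₁, ℓ₁, k₂, ℓ₂ ≥ 1: Cov(X_{k₁,ℓ₁}, X_{k₂,ℓ₂}) = min(k₁,k₂) · min(ℓ₁,ℓ₂) · α^{|k₁−k₂|} · β^{|ℓ₁−ℓ₂|}. -/
open MeasureTheory ProbabilityTheory Filter

/-!
Since `α² = β² = 1`, the condition `αβγ = -1` forces `γ = -αβ`, and then the recurrence factors
as `(1 - α S₁)(1 - β S₂) X = ε` for the two shift operators. Inverting both first-order factors
gives `X k ℓ = ∑_{i ≤ k, j ≤ ℓ} α^(k-i) β^(ℓ-j) ε i j`. The `ε i j` are orthonormal for the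
covariance, so `Cov(X k₁ ℓ₁, X k₂ ℓ₂)` is the sum, over the common rectangle `i ≤ min k₁ k₂`,
`j ≤ min ℓ₁ ℓ₂`, of `α^(k₁-i) α^(k₂-i) β^(ℓ₁-j) β^(ℓ₂-j) = α^|k₁-k₂| β^|ℓ₁-ℓ₂|`.
-/

open Finset

section Recurrence

variable {R M : Type*}

lemma eq_sum_pow_smul_of_recurrence [Semiring R] [AddCommMonoid M] [Module R M] {c : R}
    {u f : ℕ → M} (h0 : u 0 = 0) (hsucc : ∀ n, u (n + 1) = c • u n + f (n + 1)) (n : ℕ) :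
    u n = ∑ i ∈ Icc 1 n, c ^ (n - i) • f i := by
  induction n with
  | zero => simp [h0]
  | succ n ih =>
    rw [hsucc, ih, sum_Icc_succ_top (by omega), smul_sum, Nat.sub_self, pow_zero, one_smul]
    congr 1
    refine sum_congr rfl fun i hi => ?_
    rw [smul_smul, ← pow_succ', Nat.sub_add_comm (mem_Icc.1 hi).2]

lemma eq_sum_pow_mul_pow_smul_of_recurrence₂ [CommRing R] [AddCommGroup M] [Module R M]
    {α β : R} {X e : ℕ → ℕ → M} (hk0 : ∀ k, X k 0 = 0) (h0ℓ : ∀ ℓ, X 0 ℓ = 0)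
    (hsucc : ∀ k ℓ, X (k + 1) (ℓ + 1) =
      α • X k (ℓ + 1) + β • X (k + 1) ℓ - (α * β) • X k ℓ + e (k + 1) (ℓ + 1))
    (k ℓ : ℕ) :
    X k ℓ = ∑ p ∈ Icc 1 k ×ˢ Icc 1 ℓ, (α ^ (k - p.1) * β ^ (ℓ - p.2)) • e p.1 p.2 := by
  have hrow : ∀ k ℓ, X (k + 1) ℓ - α • X k ℓ = ∑ j ∈ Icc 1 ℓ, β ^ (ℓ - j) • e (k + 1) j :=
    fun k => eq_sum_pow_smul_of_recurrence (by simp [hk0]) fun ℓ => by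
      rw [hsucc]; module
  have hcol : ∀ ℓ k, X k ℓ = ∑ i ∈ Icc 1 k, α ^ (k - i) • ∑ j ∈ Icc 1 ℓ, β ^ (ℓ - j) • e i j :=
    fun ℓ => eq_sum_pow_smul_of_recurrence (h0ℓ ℓ) fun k => by
      rw [← hrow]; abel
  simp only [hcol ℓ k, sum_product, smul_sum, mul_smul]

end Recurrence

section Covariance

variable {Ω ι : Type*} [MeasurableSpace Ω] {μ : Measure Ω} [DecidableEq ι]

lemma ProbabilityTheory.iIndepFun.covariance_eq_ite [IsProbabilityMeasure μ] {f : ι → Ω → ℝ}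
    (hf : iIndepFun f μ) (hmeas : ∀ i, AEStronglyMeasurable (f i) μ)
    (hvar : ∀ i, Var[f i; μ] = 1) (i j : ι) :
    cov[f i, f j; μ] = if i = j then 1 else 0 := by
  have hL2 : ∀ i, MemLp (f i) 2 μ :=
    fun i => memLp_two_of_variance_ne_zero (hmeas i) (by simp [hvar i])
  split_ifs with hij
  · rw [hij, covariance_self (hmeas j).aemeasurable, hvar]
  · exact (hf.indepFun hij).covariance_eq_zero (hL2 i) (hL2 j)

lemma covariance_sum_smul_sum_smul_of_orthonormal [IsFiniteMeasure μ] {ε : ι → Ω → ℝ}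
    {s t : Finset ι} (a b : ι → ℝ) (hs : ∀ i ∈ s, MemLp (ε i) 2 μ)
    (ht : ∀ j ∈ t, MemLp (ε j) 2 μ)
    (horth : ∀ i ∈ s, ∀ j ∈ t, cov[ε i, ε j; μ] = if i = j then 1 else 0) :
    cov[∑ i ∈ s, a i • ε i, ∑ j ∈ t, b j • ε j; μ] = ∑ i ∈ s ∩ t, a i * b i := by
  rw [covariance_sum_sum' (fun i hi => (hs i hi).const_smul _)
    (fun j hj => (ht j hj).const_smul _)]
  calc ∑ i ∈ s, ∑ j ∈ t, cov[a i • ε i, b j • ε j; μ]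
      = ∑ i ∈ s, ∑ j ∈ t, a i * (b j * if i = j then 1 else 0) := by
        refine sum_congr rfl fun i hi => sum_congr rfl fun j hj => ?_
        rw [covariance_smul_left, covariance_smul_right, horth i hi j hj]
    _ = ∑ i ∈ s ∩ t, a i * b i := by
        simp only [mul_ite, mul_one, mul_zero, sum_ite_eq, sum_ite_mem]

lemma covariance_sum_smul_sum_smul_of_iIndepFun [IsProbabilityMeasure μ] {ε : ι → Ω → ℝ}
    {S : Set ι} (hindep : iIndepFun (fun i : S => ε i) μ)
    (hmeas : ∀ i ∈ S, AEStronglyMeasurable (ε i) μ) (hvar : ∀ i ∈ S, Var[ε i; μ] = 1)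
    {s t : Finset ι} (hs : ↑s ⊆ S) (ht : ↑t ⊆ S) (a b : ι → ℝ) :
    cov[∑ i ∈ s, a i • ε i, ∑ j ∈ t, b j • ε j; μ] = ∑ i ∈ s ∩ t, a i * b i := by
  have hL2 : ∀ i ∈ S, MemLp (ε i) 2 μ :=
    fun i hi => memLp_two_of_variance_ne_zero (hmeas i hi) (by simp [hvar i hi])
  refine covariance_sum_smul_sum_smul_of_orthonormal a b (fun i hi => hL2 i (hs hi))
    (fun j hj => hL2 j (ht hj)) fun i hi j hj => ?_
  simpa [Subtype.ext_iff] using hindep.covariance_eq_ite (fun i => hmeas i i.2)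
    (fun i => hvar i i.2) ⟨i, hs hi⟩ ⟨j, ht hj⟩

end Covariance

lemma pow_sub_mul_pow_sub_of_sq_eq_one {M : Type*} [Monoid M] {a : M} (ha : a ^ 2 = 1)
    {m n i : ℕ} (hm : i ≤ m) (hn : i ≤ n) :
    a ^ (m - i) * a ^ (n - i) = a ^ ((m : ℤ) - n).natAbs := by
  rw [← pow_add, show m - i + (n - i) = 2 * (min m n - i) + ((m : ℤ) - n).natAbs by omega,
    pow_add, pow_mul, ha, one_pow, one_mul]

lemma sum_inter_rectangle_pow_mul_pow_of_sq_eq_one {R : Type*} [CommSemiring R] {α β : R}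
    (hα : α ^ 2 = 1) (hβ : β ^ 2 = 1) (k₁ ℓ₁ k₂ ℓ₂ : ℕ) :
    ∑ p ∈ (Icc 1 k₁ ×ˢ Icc 1 ℓ₁) ∩ (Icc 1 k₂ ×ˢ Icc 1 ℓ₂),
        α ^ (k₁ - p.1) * β ^ (ℓ₁ - p.2) * (α ^ (k₂ - p.1) * β ^ (ℓ₂ - p.2)) =
      ((min k₁ k₂ : ℕ) : R) * ((min ℓ₁ ℓ₂ : ℕ) : R) *
        α ^ ((k₁ : ℤ) - k₂).natAbs * β ^ ((ℓ₁ : ℤ) - ℓ₂).natAbs := by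
  have hinter : ∀ m n : ℕ, Icc 1 m ∩ Icc 1 n = Icc 1 (min m n) := fun m n => by
    ext; simp only [mem_inter, mem_Icc]; omega
  rw [product_inter_product, hinter, hinter]
  calc _ = ∑ _p ∈ Icc 1 (min k₁ k₂) ×ˢ Icc 1 (min ℓ₁ ℓ₂),
        α ^ ((k₁ : ℤ) - k₂).natAbs * β ^ ((ℓ₁ : ℤ) - ℓ₂).natAbs := sum_congr rfl fun p hp => by
        simp only [mem_product, mem_Icc] at hp
        rw [mul_mul_mul_comm, pow_sub_mul_pow_sub_of_sq_eq_one hα (by omega) (by omega),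
          pow_sub_mul_pow_sub_of_sq_eq_one hβ (by omega) (by omega)]
    _ = _ := by simp only [sum_const, card_product, Nat.card_Icc, nsmul_eq_mul]; push_cast; ring

theorem cov_eq_vertex_general
    {Ω : Type*} [MeasurableSpace Ω] (P : Measure Ω) [IsProbabilityMeasure P]
    (ε : ℕ → ℕ → Ω → ℝ)
    (hmeas : ∀ k ℓ : ℕ, Measurable (ε k ℓ))
    (hindep : iIndepFun
      (fun p : {p : ℕ × ℕ // 1 ≤ p.1 ∧ 1 ≤ p.2} => ε p.1.1 p.1.2) P)
    (hvar : ∀ k ℓ : ℕ, 1 ≤ k → 1 ≤ ℓ → variance (ε k ℓ) P = 1)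
    (α β γ : ℝ)
    (X : ℕ → ℕ → Ω → ℝ)
    (hrec : ∀ k ℓ : ℕ, 1 ≤ k → 1 ≤ ℓ → ∀ ω : Ω,
      X k ℓ ω = α * X (k - 1) ℓ ω + β * X k (ℓ - 1) ω + γ * X (k - 1) (ℓ - 1) ω + ε k ℓ ω)
    (hbd1 : ∀ k : ℕ, ∀ ω : Ω, X k 0 ω = 0)
    (hbd2 : ∀ ℓ : ℕ, ∀ ω : Ω, X 0 ℓ ω = 0)
    (hsign : α * β * γ = -1) (hα : |α| = 1) (hβ : |β| = 1) :
    ∀ k₁ ℓ₁ k₂ ℓ₂ : ℕ, 1 ≤ k₁ → 1 ≤ ℓ₁ → 1 ≤ k₂ → 1 ≤ ℓ₂ →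
      cov P (X k₁ ℓ₁) (X k₂ ℓ₂) =
        ((min k₁ k₂ : ℕ) : ℝ) * ((min ℓ₁ ℓ₂ : ℕ) : ℝ) *
          α ^ ((k₁ : ℤ) - k₂).natAbs * β ^ ((ℓ₁ : ℤ) - ℓ₂).natAbs := by
  intro k₁ ℓ₁ k₂ ℓ₂ _ _ _ _
  have hα2 : α ^ 2 = 1 := by rw [← sq_abs, hα, one_pow]
  have hβ2 : β ^ 2 = 1 := by rw [← sq_abs, hβ, one_pow]
  have hγ : γ = -(α * β) := by linear_combination α * β * hsign - γ * β ^ 2 * hα2 - γ * hβ2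
  have hX := eq_sum_pow_mul_pow_smul_of_recurrence₂ (α := α) (β := β) (e := ε)
    (fun k => funext (hbd1 k)) (fun ℓ => funext (hbd2 ℓ)) fun k ℓ => funext fun ω => by
      simp only [hrec (k + 1) (ℓ + 1) (by omega) (by omega), add_tsub_cancel_right, hγ,
        Pi.add_apply, Pi.sub_apply, Pi.smul_apply, smul_eq_mul]
      ring
  have hpos : ∀ k ℓ, (↑(Icc 1 k ×ˢ Icc 1 ℓ) : Set (ℕ × ℕ)) ⊆ {p | 1 ≤ p.1 ∧ 1 ≤ p.2} :=
    fun k ℓ p hp => by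
      simp only [mem_coe, mem_product, mem_Icc] at hp
      exact ⟨hp.1.1, hp.2.1⟩
  change cov[X k₁ ℓ₁, X k₂ ℓ₂; P] = _
  rw [hX, hX]
  exact (covariance_sum_smul_sum_smul_of_iIndepFun (ε := Function.uncurry ε) hindep
    (fun p _ => (hmeas _ _).aestronglyMeasurable) (fun p hp => hvar _ _ hp.1 hp.2)
    (hpos k₁ ℓ₁) (hpos k₂ ℓ₂) _ _).trans
    (sum_inter_rectangle_pow_mul_pow_of_sq_eq_one hα2 hβ2 k₁ ℓ₁ k₂ ℓ₂)

theorem cov_eq_vertex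
    {Ω : Type*} [MeasurableSpace Ω] (P : Measure Ω) [IsProbabilityMeasure P]
    (ε : ℕ → ℕ → Ω → ℝ)
    (hmeas : ∀ k ℓ : ℕ, Measurable (ε k ℓ))
    (hindep : iIndepFun
      (fun p : {p : ℕ × ℕ // 1 ≤ p.1 ∧ 1 ≤ p.2} => ε p.1.1 p.1.2) P)
    (hmean : ∀ k ℓ : ℕ, 1 ≤ k → 1 ≤ ℓ → ∫ ω, ε k ℓ ω ∂P = 0)
    (hvar : ∀ k ℓ : ℕ, 1 ≤ k → 1 ≤ ℓ → variance (ε k ℓ) P = 1)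
    (α β γ : ℝ)
    (X : ℕ → ℕ → Ω → ℝ)
    (hrec : ∀ k ℓ : ℕ, 1 ≤ k → 1 ≤ ℓ → ∀ ω : Ω,
      X k ℓ ω = α * X (k - 1) ℓ ω + β * X k (ℓ - 1) ω + γ * X (k - 1) (ℓ - 1) ω + ε k ℓ ω)
    (hbd1 : ∀ k : ℕ, ∀ ω : Ω, X k 0 ω = 0)
    (hbd2 : ∀ ℓ : ℕ, ∀ ω : Ω, X 0 ℓ ω = 0)
    (hsign : α * β * γ = -1) (hα : |α| = 1) (hβ : |β| = 1) (hγ : |γ| = 1) :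
    ∀ k₁ ℓ₁ k₂ ℓ₂ : ℕ, 1 ≤ k₁ → 1 ≤ ℓ₁ → 1 ≤ k₂ → 1 ≤ ℓ₂ →
      cov P (X k₁ ℓ₁) (X k₂ ℓ₂) =
        ((min k₁ k₂ : ℕ) : ℝ) * ((min ℓ₁ ℓ₂ : ℕ) : ℝ) *
          α ^ ((k₁ : ℤ) - k₂).natAbs * β ^ ((ℓ₁ : ℤ) - ℓ₂).natAbs :=
  cov_eq_vertex_general P ε hmeas hindep hvar α β γ X hrec hbd1 hbd2 hsign hα hβ
end

section
/- Suppose the real parameters satisfy αβγ ≤ 0, |α| = 1 and |β| = |γ| < 1. Then for all fixed reals s, t > 0: lim_{n→∞} n^{−1} Var(Y^{(n)}(s,t)) = s / (1 − γ²). -/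
/-!
The hypotheses `|α| = 1`, `|β| = |γ|` and `αβγ ≤ 0` force `γ = -αβ`, so the recursion factorises as
`(1 - α S₁)(1 - β S₂) X = ε` for the two backward shifts `S₁, S₂`, and inverting each factor gives
`X k ℓ = ∑_{i ≤ k, j ≤ ℓ} α^(k-i) β^(ℓ-j) ε i j`. By independence,
`Var X k ℓ = (∑_{i ≤ k} α^(2(k-i))) (∑_{j ≤ ℓ} β^(2(ℓ-j))) = k ∑_{m < ℓ} γ^(2m)`, and with
`k = ⌊ns⌋`, `ℓ = ⌊nt⌋ → ∞` this is `n s / (1 - γ²) + o(n)`.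
-/

open MeasureTheory ProbabilityTheory Filter Topology

lemma eq_neg_of_abs_eq_of_mul_nonpos {a b : ℝ} (habs : |b| = |a|) (hmul : a * b ≤ 0) :
    b = -a := by
  rcases abs_eq_abs.mp habs with rfl | rfl
  · nlinarith [mul_self_nonneg b]
  · rfl

section GeomConv

variable {R : Type*}

def geomConv [Semiring R] (q : R) (g : ℕ → R) (n : ℕ) : R :=
  ∑ j ∈ Finset.Icc 1 n, q ^ (n - j) * g j

@[simp]
lemma geomConv_zero [Semiring R] (q : R) (g : ℕ → R) : geomConv q g 0 = 0 := by
  simp [geomConv]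

lemma geomConv_succ [Semiring R] (q : R) (g : ℕ → R) (n : ℕ) :
    geomConv q g (n + 1) = q * geomConv q g n + g (n + 1) := by
  rw [geomConv, Finset.sum_Icc_succ_top (by omega), Nat.sub_self, pow_zero, one_mul, geomConv,
    Finset.mul_sum]
  congr 1
  refine Finset.sum_congr rfl fun j hj => ?_
  rw [Nat.sub_add_comm (Finset.mem_Icc.mp hj).2, pow_succ', mul_assoc]

lemma geomConv_one [Semiring R] (q : R) (n : ℕ) :
    geomConv q 1 n = ∑ m ∈ Finset.range n, q ^ m := by
  induction n with
  | zero => simp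
  | succ n ih => rw [geomConv_succ, ih, geom_sum_succ, Pi.one_apply]

theorem eq_geomConv_geomConv_of_rec [CommRing R] {a b : R} {x e : ℕ → ℕ → R}
    (hx₁ : ∀ k, x k 0 = 0) (hx₂ : ∀ ℓ, x 0 ℓ = 0)
    (hrec : ∀ k ℓ, x (k + 1) (ℓ + 1) =
      a * x k (ℓ + 1) + b * x (k + 1) ℓ - a * b * x k ℓ + e (k + 1) (ℓ + 1))
    (k ℓ : ℕ) : x k ℓ = geomConv a (fun i => geomConv b (e i) ℓ) k := by
  induction k generalizing ℓ with
  | zero => simp [hx₂]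
  | succ k ihk =>
    induction ℓ with
    | zero => simp [hx₁, geomConv]
    | succ ℓ ihℓ =>
      rw [hrec, ihk, ihk, ihℓ, geomConv_succ a _ k, geomConv_succ a _ k, geomConv_succ b]
      ring

end GeomConv

section Variance

variable {Ω : Type*} [MeasurableSpace Ω] {P : Measure Ω}

lemma iIndepFun.variance_sum_const_mul {ι : Type*} {f : ι → Ω → ℝ} (hf : iIndepFun f P)
    {s : Finset ι} (hs : ∀ i ∈ s, MemLp (f i) 2 P) (c : ι → ℝ) :
    variance (fun ω => ∑ i ∈ s, c i * f i ω) P = ∑ i ∈ s, c i ^ 2 * variance (f i) P := by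
  have hsum := IndepFun.variance_sum (μ := P) (s := s) (X := fun i ω => c i * f i ω)
    (fun i hi => (hs i hi).const_mul (c i))
    (fun i _ j _ hij => (hf.indepFun hij).comp (measurable_const_mul (c i))
      (measurable_const_mul (c j)))
  rw [Finset.sum_fn] at hsum
  rw [hsum]
  exact Finset.sum_congr rfl fun i _ => variance_const_mul (c i) (f i) P

theorem variance_geomConv_geomConv {ε : ℕ → ℕ → Ω → ℝ}
    (hindep : iIndepFun (fun p : {p : ℕ × ℕ // 1 ≤ p.1 ∧ 1 ≤ p.2} => ε p.1.1 p.1.2) P)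
    (hL2 : ∀ k ℓ, 1 ≤ k → 1 ≤ ℓ → MemLp (ε k ℓ) 2 P)
    (hvar : ∀ k ℓ, 1 ≤ k → 1 ≤ ℓ → variance (ε k ℓ) P = 1) (a b : ℝ) (k ℓ : ℕ) :
    variance (fun ω => geomConv a (fun i => geomConv b (fun j => ε i j ω) ℓ) k) P
      = geomConv (a ^ 2) 1 k * geomConv (b ^ 2) 1 ℓ := by
  classical
  set S := Finset.Icc 1 k ×ˢ Finset.Icc 1 ℓ
  have hS : ∀ p ∈ S, 1 ≤ p.1 ∧ 1 ≤ p.2 := fun p hp => by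
    simp only [S, Finset.mem_product, Finset.mem_Icc] at hp
    exact ⟨hp.1.1, hp.2.1⟩
  set c : ℕ × ℕ → ℝ := fun p => a ^ (k - p.1) * b ^ (ℓ - p.2)
  have hfun : (fun ω => geomConv a (fun i => geomConv b (fun j => ε i j ω) ℓ) k)
      = fun ω => ∑ p ∈ S.subtype (fun p => 1 ≤ p.1 ∧ 1 ≤ p.2), c p.1 * ε p.1.1 p.1.2 ω := by
    funext ω
    rw [Finset.sum_subtype_of_mem (fun p => c p * ε p.1 p.2 ω) hS, Finset.sum_product]
    simp only [geomConv, c, Finset.mul_sum, mul_assoc]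
  rw [hfun, iIndepFun.variance_sum_const_mul hindep (fun p _ => hL2 _ _ p.2.1 p.2.2),
    Finset.sum_congr rfl fun p _ => by rw [hvar _ _ p.2.1 p.2.2, mul_one],
    Finset.sum_subtype_of_mem (fun p => c p ^ 2) hS, Finset.sum_product, geomConv, geomConv,
    Finset.sum_mul_sum]
  refine Finset.sum_congr rfl fun i _ => Finset.sum_congr rfl fun j _ => ?_
  simp only [c, Pi.one_apply, mul_one, mul_pow, ← pow_mul, mul_comm 2]

end Variance

lemma tendsto_floor_mul_mul_geom_sum_div {q s t : ℝ} (hq : |q| < 1) (hs : 0 ≤ s) (ht : 0 < t) :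
    Tendsto (fun n : ℕ => (n : ℝ)⁻¹ * (⌊(n : ℝ) * s⌋₊ * ∑ m ∈ Finset.range ⌊(n : ℝ) * t⌋₊, q ^ m))
      atTop (𝓝 (s / (1 - q))) := by
  have hfloor_s : Tendsto (fun n : ℕ => (⌊(n : ℝ) * s⌋₊ : ℝ) / n) atTop (𝓝 s) := by
    simpa [Function.comp_def, mul_comm] using
      (tendsto_nat_floor_mul_div_atTop hs).comp tendsto_natCast_atTop_atTop
  have hfloor_t : Tendsto (fun n : ℕ => ⌊(n : ℝ) * t⌋₊) atTop atTop := by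
    simpa [mul_comm] using tendsto_nat_floor_mul_atTop t ht
  have hgeom := (hasSum_geometric_of_abs_lt_one hq).tendsto_sum_nat.comp hfloor_t
  refine (hfloor_s.mul hgeom).congr (fun n => ?_)
  simp only [Function.comp_apply]
  ring

theorem variance_limit_edge_alpha_general
    {Ω : Type*} [MeasurableSpace Ω] (P : Measure Ω) [IsProbabilityMeasure P]
    (ε : ℕ → ℕ → Ω → ℝ)
    (hmeas : ∀ k ℓ : ℕ, Measurable (ε k ℓ))
    (hindep : iIndepFun
      (fun p : {p : ℕ × ℕ // 1 ≤ p.1 ∧ 1 ≤ p.2} => ε p.1.1 p.1.2) P)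
    (hvar : ∀ k ℓ : ℕ, 1 ≤ k → 1 ≤ ℓ → variance (ε k ℓ) P = 1)
    (α β γ : ℝ)
    (X : ℕ → ℕ → Ω → ℝ)
    (hrec : ∀ k ℓ : ℕ, 1 ≤ k → 1 ≤ ℓ → ∀ ω : Ω,
      X k ℓ ω = α * X (k - 1) ℓ ω + β * X k (ℓ - 1) ω + γ * X (k - 1) (ℓ - 1) ω + ε k ℓ ω)
    (hbd1 : ∀ k : ℕ, ∀ ω : Ω, X k 0 ω = 0)
    (hbd2 : ∀ ℓ : ℕ, ∀ ω : Ω, X 0 ℓ ω = 0)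
    (hsign : α * β * γ ≤ 0) (hα : |α| = 1) (hβγ : |β| = |γ|) (hγ : |γ| < 1) :
    ∀ s t : ℝ, 0 < s → 0 < t →
      Tendsto (fun n : ℕ => ((n : ℝ))⁻¹ * variance (X ⌊(n : ℝ) * s⌋₊ ⌊(n : ℝ) * t⌋₊) P)
        atTop (nhds (s / (1 - γ ^ 2))) := by
  intro s t hs ht
  have hγ_eq : γ = -(α * β) :=
    eq_neg_of_abs_eq_of_mul_nonpos (by rw [abs_mul, hα, one_mul, hβγ]) hsign
  have hX : ∀ k ℓ, X k ℓ = fun ω => geomConv α (fun i => geomConv β (fun j => ε i j ω) ℓ) k :=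
    fun k ℓ => funext fun ω => eq_geomConv_geomConv_of_rec (x := fun k ℓ => X k ℓ ω)
      (hbd1 · ω) (hbd2 · ω) (fun k ℓ => by
        rw [hrec (k + 1) (ℓ + 1) k.succ_pos ℓ.succ_pos, hγ_eq]
        simp only [Nat.add_sub_cancel]
        ring) k ℓ
  have hL2 : ∀ k ℓ, 1 ≤ k → 1 ≤ ℓ → MemLp (ε k ℓ) 2 P := fun k ℓ hk hℓ =>
    memLp_two_of_variance_ne_zero (hmeas k ℓ).aestronglyMeasurable (by simp [hvar k ℓ hk hℓ])
  have hVar : ∀ k ℓ : ℕ, variance (X k ℓ) P = k * ∑ m ∈ Finset.range ℓ, (γ ^ 2) ^ m := by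
    intro k ℓ
    rw [hX, variance_geomConv_geomConv hindep hL2 hvar, ← sq_abs α, hα, ← sq_abs β, hβγ, sq_abs,
      geomConv_one, geomConv_one]
    simp
  have hγ2 : |γ ^ 2| < 1 := by
    rw [abs_pow, sq_lt_one_iff₀ (abs_nonneg γ)]
    exact hγ
  simpa only [hVar] using tendsto_floor_mul_mul_geom_sum_div hγ2 hs.le ht

theorem variance_limit_edge_alpha
    {Ω : Type*} [MeasurableSpace Ω] (P : Measure Ω) [IsProbabilityMeasure P]
    (ε : ℕ → ℕ → Ω → ℝ)
    (hmeas : ∀ k ℓ : ℕ, Measurable (ε k ℓ))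
    (hindep : iIndepFun
      (fun p : {p : ℕ × ℕ // 1 ≤ p.1 ∧ 1 ≤ p.2} => ε p.1.1 p.1.2) P)
    (hmean : ∀ k ℓ : ℕ, 1 ≤ k → 1 ≤ ℓ → ∫ ω, ε k ℓ ω ∂P = 0)
    (hvar : ∀ k ℓ : ℕ, 1 ≤ k → 1 ≤ ℓ → variance (ε k ℓ) P = 1)
    (α β γ : ℝ)
    (X : ℕ → ℕ → Ω → ℝ)
    (hrec : ∀ k ℓ : ℕ, 1 ≤ k → 1 ≤ ℓ → ∀ ω : Ω,
      X k ℓ ω = α * X (k - 1) ℓ ω + β * X k (ℓ - 1) ω + γ * X (k - 1) (ℓ - 1) ω + ε k ℓ ω)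
    (hbd1 : ∀ k : ℕ, ∀ ω : Ω, X k 0 ω = 0)
    (hbd2 : ∀ ℓ : ℕ, ∀ ω : Ω, X 0 ℓ ω = 0)
    (hsign : α * β * γ ≤ 0) (hα : |α| = 1) (hβγ : |β| = |γ|) (hγ : |γ| < 1) :
    ∀ s t : ℝ, 0 < s → 0 < t →
      Tendsto (fun n : ℕ => ((n : ℝ))⁻¹ * variance (X ⌊(n : ℝ) * s⌋₊ ⌊(n : ℝ) * t⌋₊) P)
        atTop (nhds (s / (1 - γ ^ 2))) :=
  variance_limit_edge_alpha_general P ε hmeas hindep hvar α β γ X hrec hbd1 hbd2 hsign hα hβγ hγ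
end

section
/- Suppose the real parameters satisfy αβγ = −1 and |α| = |β| = |γ| = 1. Then for all fixed reals s, t > 0: lim_{n→∞} n^{−2} Var(Y^{(n)}(s,t)) = s·t. -/
/-!
With `γ = -αβ` the recursion factors as `(1 - α S₁)(1 - β S₂) X = ε` for the two shift operators,
so `X k ℓ = ∑_{i<k, j<ℓ} α^i β^j ε (k-i) (ℓ-j)`. Since `α² = β² = 1` all coefficients are `±1`,
hence independence gives `Var (X k ℓ) = kℓ`, and `⌊ns⌋₊⌊nt⌋₊ / n² → st`.
-/

open MeasureTheory ProbabilityTheory Filter Finset Topology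

theorem eq_sum_pow_mul_pow_of_rec {R : Type*} [CommRing R] {α β : R} {e X : ℕ → ℕ → R}
    (hrec : ∀ k ℓ, X (k + 1) (ℓ + 1) =
      α * X k (ℓ + 1) + β * X (k + 1) ℓ - α * β * X k ℓ + e (k + 1) (ℓ + 1))
    (hX0 : ∀ k, X k 0 = 0) (h0X : ∀ ℓ, X 0 ℓ = 0) (k ℓ : ℕ) :
    X k ℓ = ∑ i ∈ range k, ∑ j ∈ range ℓ, α ^ i * β ^ j * e (k - i) (ℓ - j) := by
  induction k generalizing ℓ with
  | zero => simp [h0X]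
  | succ k ihk =>
    induction ℓ with
    | zero => simp [hX0]
    | succ ℓ ihℓ =>
      rw [hrec, ihk, ihk, ihℓ]
      simp only [sum_range_succ' _ k, sum_range_succ' _ ℓ, Nat.add_sub_add_right, Nat.sub_zero,
        pow_succ, sum_add_distrib, mul_add, mul_sum]
      ring_nf

theorem variance_sum_mul_of_pairwise_indepFun {Ω ι : Type*} [MeasurableSpace Ω] {P : Measure Ω}
    [IsFiniteMeasure P] {Y : ι → Ω → ℝ} {s : Finset ι} (c : ι → ℝ)
    (hY : ∀ i ∈ s, MemLp (Y i) 2 P)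
    (hind : (s : Set ι).Pairwise fun i j => IndepFun (Y i) (Y j) P) :
    variance (fun ω => ∑ i ∈ s, c i * Y i ω) P = ∑ i ∈ s, c i ^ 2 * variance (Y i) P := by
  have hsum : (fun ω => ∑ i ∈ s, c i * Y i ω) = ∑ i ∈ s, fun ω => c i * Y i ω := by
    ext ω
    rw [Finset.sum_apply]
  rw [hsum, IndepFun.variance_sum (fun i hi => (hY i hi).const_mul (c i))
    (hind.mono' fun i j h => h.comp (measurable_const_mul (c i)) (measurable_const_mul (c j)))]
  exact sum_congr rfl fun i _ => variance_const_mul (c i) (Y i) P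

theorem variance_sum_pow_mul_pow_of_sq_eq_one {Ω : Type*} [MeasurableSpace Ω] {P : Measure Ω}
    [IsFiniteMeasure P] {ε : ℕ → ℕ → Ω → ℝ} (hmeas : ∀ k ℓ : ℕ, Measurable (ε k ℓ))
    (hindep : iIndepFun (fun p : {p : ℕ × ℕ // 1 ≤ p.1 ∧ 1 ≤ p.2} => ε p.1.1 p.1.2) P)
    (hvar : ∀ k ℓ : ℕ, 1 ≤ k → 1 ≤ ℓ → variance (ε k ℓ) P = 1)
    {a b : ℝ} (ha : a ^ 2 = 1) (hb : b ^ 2 = 1) (k ℓ : ℕ) :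
    variance (fun ω => ∑ i ∈ range k, ∑ j ∈ range ℓ, a ^ i * b ^ j * ε (k - i) (ℓ - j) ω) P
      = k * ℓ := by
  have hindex : ∀ p ∈ range k ×ˢ range ℓ, 1 ≤ k - p.1 ∧ 1 ≤ ℓ - p.2 := by
    intro p hp
    rw [mem_product, mem_range, mem_range] at hp
    omega
  simp_rw [← sum_product' (range k) (range ℓ) fun i j => a ^ i * b ^ j * ε (k - i) (ℓ - j) _]
  refine (variance_sum_mul_of_pairwise_indepFun (s := range k ×ˢ range ℓ)
    (fun p => a ^ p.1 * b ^ p.2) (Y := fun p => ε (k - p.1) (ℓ - p.2)) ?_ ?_).trans ?_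
  · intro p hp
    refine memLp_two_of_variance_ne_zero (hmeas _ _).aestronglyMeasurable ?_
    rw [hvar _ _ (hindex p hp).1 (hindex p hp).2]
    exact one_ne_zero
  · intro p hp q hq hpq
    have hp' := hindex p hp
    have hq' := hindex q hq
    refine hindep.indepFun (i := ⟨(k - p.1, ℓ - p.2), hp'⟩) (j := ⟨(k - q.1, ℓ - q.2), hq'⟩)
      fun h => hpq ?_
    simp only [Subtype.mk.injEq, Prod.mk.injEq] at h
    exact Prod.ext (by omega) (by omega)
  · have hsq : ∀ n : ℕ, ∀ x : ℝ, x ^ 2 = 1 → (x ^ n) ^ 2 = 1 := fun n x hx => by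
      rw [pow_right_comm, hx, one_pow]
    calc _ = ∑ p ∈ range k ×ˢ range ℓ, (1 : ℝ) := sum_congr rfl fun p hp => by
          rw [hvar _ _ (hindex p hp).1 (hindex p hp).2, mul_one, mul_pow, hsq _ _ ha, hsq _ _ hb,
            one_mul]
      _ = k * ℓ := by simp

theorem tendsto_natFloor_mul_mul_natFloor_mul_div_sq {s t : ℝ} (hs : 0 ≤ s) (ht : 0 ≤ t) :
    Tendsto (fun n : ℕ => ((n : ℝ) ^ 2)⁻¹ * (⌊(n : ℝ) * s⌋₊ * ⌊(n : ℝ) * t⌋₊)) atTop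
      (𝓝 (s * t)) := by
  have h1 := (tendsto_nat_floor_mul_div_atTop hs).comp tendsto_natCast_atTop_atTop
  have h2 := (tendsto_nat_floor_mul_div_atTop ht).comp tendsto_natCast_atTop_atTop
  refine (h1.mul h2).congr fun n => ?_
  simp only [Function.comp_apply, mul_comm s, mul_comm t]
  ring

theorem variance_limit_vertex_general
    {Ω : Type*} [MeasurableSpace Ω] (P : Measure Ω) [IsProbabilityMeasure P]
    (ε : ℕ → ℕ → Ω → ℝ)
    (hmeas : ∀ k ℓ : ℕ, Measurable (ε k ℓ))
    (hindep : iIndepFun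
      (fun p : {p : ℕ × ℕ // 1 ≤ p.1 ∧ 1 ≤ p.2} => ε p.1.1 p.1.2) P)
    (hvar : ∀ k ℓ : ℕ, 1 ≤ k → 1 ≤ ℓ → variance (ε k ℓ) P = 1)
    (α β γ : ℝ)
    (X : ℕ → ℕ → Ω → ℝ)
    (hrec : ∀ k ℓ : ℕ, 1 ≤ k → 1 ≤ ℓ → ∀ ω : Ω,
      X k ℓ ω = α * X (k - 1) ℓ ω + β * X k (ℓ - 1) ω + γ * X (k - 1) (ℓ - 1) ω + ε k ℓ ω)
    (hbd1 : ∀ k : ℕ, ∀ ω : Ω, X k 0 ω = 0)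
    (hbd2 : ∀ ℓ : ℕ, ∀ ω : Ω, X 0 ℓ ω = 0)
    (hsign : α * β * γ = -1) (hα : |α| = 1) (hβ : |β| = 1) :
    ∀ s t : ℝ, 0 < s → 0 < t →
      Tendsto (fun n : ℕ => (((n : ℝ)) ^ 2)⁻¹ * variance (X ⌊(n : ℝ) * s⌋₊ ⌊(n : ℝ) * t⌋₊) P)
        atTop (nhds (s * t)) := by
  intro s t hs ht
  have hα2 : α ^ 2 = 1 := by rw [← sq_abs, hα, one_pow]
  have hβ2 : β ^ 2 = 1 := by rw [← sq_abs, hβ, one_pow]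
  have hγ : γ = -(α * β) := by
    linear_combination α * β * hsign - γ * hα2 - γ * α ^ 2 * hβ2
  have hX : ∀ k ℓ, X k ℓ =
      fun ω => ∑ i ∈ range k, ∑ j ∈ range ℓ, α ^ i * β ^ j * ε (k - i) (ℓ - j) ω :=
    fun k ℓ => funext fun ω =>
      eq_sum_pow_mul_pow_of_rec (X := fun k ℓ => X k ℓ ω) (e := fun k ℓ => ε k ℓ ω)
        (fun k ℓ => by
          rw [hrec (k + 1) (ℓ + 1) (by omega) (by omega) ω, hγ, Nat.add_sub_cancel,
            Nat.add_sub_cancel]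
          ring)
        (hbd1 · ω) (hbd2 · ω) k ℓ
  simp only [hX, variance_sum_pow_mul_pow_of_sq_eq_one hmeas hindep hvar hα2 hβ2]
  exact tendsto_natFloor_mul_mul_natFloor_mul_div_sq hs.le ht.le

theorem variance_limit_vertex
    {Ω : Type*} [MeasurableSpace Ω] (P : Measure Ω) [IsProbabilityMeasure P]
    (ε : ℕ → ℕ → Ω → ℝ)
    (hmeas : ∀ k ℓ : ℕ, Measurable (ε k ℓ))
    (hindep : iIndepFun
      (fun p : {p : ℕ × ℕ // 1 ≤ p.1 ∧ 1 ≤ p.2} => ε p.1.1 p.1.2) P)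
    (hmean : ∀ k ℓ : ℕ, 1 ≤ k → 1 ≤ ℓ → ∫ ω, ε k ℓ ω ∂P = 0)
    (hvar : ∀ k ℓ : ℕ, 1 ≤ k → 1 ≤ ℓ → variance (ε k ℓ) P = 1)
    (α β γ : ℝ)
    (X : ℕ → ℕ → Ω → ℝ)
    (hrec : ∀ k ℓ : ℕ, 1 ≤ k → 1 ≤ ℓ → ∀ ω : Ω,
      X k ℓ ω = α * X (k - 1) ℓ ω + β * X k (ℓ - 1) ω + γ * X (k - 1) (ℓ - 1) ω + ε k ℓ ω)
    (hbd1 : ∀ k : ℕ, ∀ ω : Ω, X k 0 ω = 0)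
    (hbd2 : ∀ ℓ : ℕ, ∀ ω : Ω, X 0 ℓ ω = 0)
    (hsign : α * β * γ = -1) (hα : |α| = 1) (hβ : |β| = 1) (hγ : |γ| = 1) :
    ∀ s t : ℝ, 0 < s → 0 < t →
      Tendsto (fun n : ℕ => (((n : ℝ)) ^ 2)⁻¹ * variance (X ⌊(n : ℝ) * s⌋₊ ⌊(n : ℝ) * t⌋₊) P)
        atTop (nhds (s * t)) :=
  variance_limit_vertex_general P ε hmeas hindep hvar α β γ X hrec hbd1 hbd2 hsign hα hβ
end

section
/- For all nonnegative integers m, n with n ≤ m and all reals α, β, γ: G(m,n;α,β,γ) = Σ_{r=0}^{n} C(n,r) · C(m,n−r) · β^r · (αβ+γ)^{n−r} · α^{m−n+r}, where C(·,·) denotes the binomial coefficient. -/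
open MeasureTheory ProbabilityTheory Filter

open Finset Nat

/-! Expanding `(αβ + γ)^(n-r)` binomially and exchanging the two sums, the coefficient of
`α^(m-k) β^(n-k) γ^k` on the right becomes `C(n,k) Σ_r C(n-k,r) C(m,n-r) = C(n,k) C(m+n-k,n)`
by Vandermonde's identity, and this is the multinomial coefficient
`(m+n-k)! / ((m-k)! (n-k)! k!)` of `G`. -/

theorem Nat.choose_mul_choose_sub_comm (n r k : ℕ) :
    n.choose r * (n - r).choose k = n.choose k * (n - k).choose r := by
  rcases le_or_gt (r + k) n with h | h
  · have hr := choose_mul (n := n) (le_add_right r k)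
    have hk := choose_mul (n := n) (le_add_left k r)
    rw [Nat.add_sub_cancel_left] at hr
    rw [Nat.add_sub_cancel] at hk
    rw [← hr, ← hk, choose_symm_add]
  · have h0 {a b : ℕ} (hab : n < a + b) : n.choose a * (n - a).choose b = 0 := by
      rcases le_or_gt a n with ha | ha
      · rw [choose_eq_zero_of_lt (n := n - a) (by omega), mul_zero]
      · rw [choose_eq_zero_of_lt ha, zero_mul]
    rw [h0 h, h0 (by omega)]

theorem Nat.sum_choose_mul_choose_sub_mul_choose (m n k : ℕ) (hk : k ≤ n) :
    ∑ r ∈ range (n + 1), n.choose r * (n - r).choose k * m.choose (n - r) =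
      n.choose k * (m + n - k).choose n := by
  simp_rw [choose_mul_choose_sub_comm n _ k, mul_assoc, ← mul_sum]
  rw [show m + n - k = (n - k) + m by omega, add_choose_eq, sum_antidiagonal_eq_sum_range_succ_mk]

theorem Nat.cast_factorial_div_eq_choose_mul_choose_s18 {K : Type*} [Field K] [CharZero K]
    {m n k : ℕ} (hkm : k ≤ m) (hkn : k ≤ n) :
    ((m + n - k)! : K) / ((m - k)! * (n - k)! * k !) = n.choose k * (m + n - k).choose n := by
  rw [div_eq_iff (by simp [factorial_ne_zero])]
  have hn := choose_mul_factorial_mul_factorial hkn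
  have hmn := add_choose_mul_factorial_mul_factorial (m - k) n
  rw [show m - k + n = m + n - k by omega] at hmn
  rw [← hmn, ← hn]
  push_cast
  ring

theorem choose_mul_choose_mul_add_pow_eq_sum {R : Type*} [CommSemiring R] {m n r : ℕ}
    (hnm : n ≤ m) (hrn : r ≤ n) (α β γ : R) :
    (n.choose r : R) * m.choose (n - r) * β ^ r * (α * β + γ) ^ (n - r) * α ^ (m - n + r) =
      ∑ k ∈ range (n + 1), ((n.choose r * (n - r).choose k * m.choose (n - r) : ℕ) : R) *
        (α ^ (m - k) * β ^ (n - k) * γ ^ k) := by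
  rw [add_comm (α * β), add_pow, mul_sum, sum_mul,
    ← sum_subset (range_subset_range.2 (by omega : n - r + 1 ≤ n + 1))]
  · refine sum_congr rfl fun k hk => ?_
    rw [mem_range_succ_iff] at hk
    rw [show m - k = (n - r - k) + (m - n + r) by omega, show n - k = r + (n - r - k) by omega]
    push_cast
    ring
  · intro k _ hk
    rw [choose_eq_zero_of_lt (n := n - r) (by simp only [mem_range, not_lt] at hk; omega)]
    simp

theorem G_binomial_form (m n : ℕ) (hnm : n ≤ m) (α β γ : ℝ) :
    G m n α β γ = ∑ r ∈ Finset.range (n + 1),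
      (n.choose r : ℝ) * (m.choose (n - r) : ℝ) * β ^ r *
        (α * β + γ) ^ (n - r) * α ^ (m - n + r) := by
  rw [G, min_eq_right hnm]
  calc _ = ∑ k ∈ range (n + 1), ((n.choose k * (m + n - k).choose n : ℕ) : ℝ) *
        (α ^ (m - k) * β ^ (n - k) * γ ^ k) := by
        refine sum_congr rfl fun k hk => ?_
        rw [mem_range_succ_iff] at hk
        rw [Nat.cast_factorial_div_eq_choose_mul_choose_s18 (by omega) hk]
        push_cast
        ring
    _ = ∑ k ∈ range (n + 1), ∑ r ∈ range (n + 1),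
        ((n.choose r * (n - r).choose k * m.choose (n - r) : ℕ) : ℝ) *
          (α ^ (m - k) * β ^ (n - k) * γ ^ k) := by
        refine sum_congr rfl fun k hk => ?_
        rw [← Nat.sum_choose_mul_choose_sub_mul_choose m n k (mem_range_succ_iff.1 hk),
          Nat.cast_sum, sum_mul]
    _ = _ := by
        rw [sum_comm]
        exact sum_congr rfl fun r hr =>
          (choose_mul_choose_mul_add_pow_eq_sum hnm (mem_range_succ_iff.1 hr) α β γ).symm
end

section
/- Suppose the real parameters satisfy α = β = 0 and |γ| = 1. Then for all integers k, ℓ ≥ 0: Var(X_{k,ℓ}) = min(k,ℓ), and consequently for all fixed reals s, t > 0: lim_{n→∞} n^{−1} Var(Y^{(n)}(s,t)) = min(s,t). -/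
open MeasureTheory ProbabilityTheory Filter Finset

/-!
With `α = β = 0` the recursion only moves along diagonals, so unrolling it gives
`X k ℓ = ∑_{j < min k ℓ} γ ^ j ε (k - j) (ℓ - j)`, a sum of `min k ℓ` distinct, hence independent,
noise terms. Since `γ ^ (2 j) = 1`, each contributes variance `1`, so `Var X k ℓ = min k ℓ`.
The limit follows from `⌊n s⌋₊ / n → s`.
-/

theorem eq_sum_of_diagonal_recursion {R M : Type*} [Semiring R] [AddCommMonoid M] [Module R M]
    {γ : R} {X ε : ℕ → ℕ → M}
    (hrec : ∀ k ℓ, X (k + 1) (ℓ + 1) = γ • X k ℓ + ε (k + 1) (ℓ + 1))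
    (hX₀ : ∀ k, X k 0 = 0) (h₀X : ∀ ℓ, X 0 ℓ = 0) (k ℓ : ℕ) :
    X k ℓ = ∑ j ∈ range (min k ℓ), γ ^ j • ε (k - j) (ℓ - j) := by
  induction k generalizing ℓ with
  | zero => simp [h₀X]
  | succ k ih =>
    cases ℓ with
    | zero => simp [hX₀]
    | succ ℓ =>
      rw [hrec, ih, Nat.succ_min_succ, sum_range_succ', smul_sum]
      simp [pow_succ', mul_smul, add_comm]

section Variance

variable {Ω : Type*} [MeasurableSpace Ω] {μ : Measure Ω}

theorem variance_sum_smul_of_pairwise_indepFun {ι : Type*}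
    {Y : ι → Ω → ℝ} {s : Finset ι} (c : ι → ℝ) (hY : ∀ i ∈ s, MemLp (Y i) 2 μ)
    (hindep : Set.Pairwise ↑s fun i j => Y i ⟂ᵢ[μ] Y j) :
    variance (∑ i ∈ s, c i • Y i) μ = ∑ i ∈ s, c i ^ 2 * variance (Y i) μ := by
  rw [IndepFun.variance_sum (fun i hi => (hY i hi).const_smul (c i))
    fun i hi j hj hij => (hindep hi hj hij).comp (measurable_const_smul (c i))
      (measurable_const_smul (c j))]
  exact sum_congr rfl fun i _ => variance_smul _ _ _

variable {ε : ℕ → ℕ → Ω → ℝ}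

theorem indepFun_of_iIndepFun_quadrant
    (hindep : iIndepFun (fun p : {p : ℕ × ℕ // 1 ≤ p.1 ∧ 1 ≤ p.2} => ε p.1.1 p.1.2) μ)
    {a b c d : ℕ} (ha : 1 ≤ a) (hb : 1 ≤ b) (hc : 1 ≤ c) (hd : 1 ≤ d) (hne : (a, b) ≠ (c, d)) :
    ε a b ⟂ᵢ[μ] ε c d :=
  hindep.indepFun (i := ⟨(a, b), ha, hb⟩) (j := ⟨(c, d), hc, hd⟩)
    fun h => hne (congrArg Subtype.val h)

theorem variance_sum_range_min_diagonal [IsFiniteMeasure μ]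
    (hmeas : ∀ k ℓ, Measurable (ε k ℓ))
    (hindep : iIndepFun (fun p : {p : ℕ × ℕ // 1 ≤ p.1 ∧ 1 ≤ p.2} => ε p.1.1 p.1.2) μ)
    (hvar : ∀ k ℓ, 1 ≤ k → 1 ≤ ℓ → variance (ε k ℓ) μ = 1) {γ : ℝ} (hγ : |γ| = 1) (k ℓ : ℕ) :
    variance (∑ j ∈ range (min k ℓ), γ ^ j • ε (k - j) (ℓ - j)) μ = min k ℓ := by
  have hpos : ∀ j ∈ range (min k ℓ), 1 ≤ k - j ∧ 1 ≤ ℓ - j := fun j hj => by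
    rw [mem_range] at hj; omega
  have hvar' : ∀ j ∈ range (min k ℓ), variance (ε (k - j) (ℓ - j)) μ = 1 :=
    fun j hj => hvar _ _ (hpos j hj).1 (hpos j hj).2
  rw [variance_sum_smul_of_pairwise_indepFun _
    (fun j hj => memLp_two_of_variance_ne_zero (hmeas _ _).aestronglyMeasurable
      (by rw [hvar' j hj]; exact one_ne_zero))
    fun i hi j hj hij => indepFun_of_iIndepFun_quadrant hindep (hpos i hi).1 (hpos i hi).2
      (hpos j hj).1 (hpos j hj).2 (by simp at hi hj ⊢; omega)]
  have hγpow : ∀ j : ℕ, (γ ^ j) ^ 2 = 1 := fun j => by rw [← sq_abs, abs_pow, hγ, one_pow, one_pow]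
  simp only [hγpow, one_mul]
  simp [sum_congr rfl hvar']

end Variance

theorem tendsto_inv_mul_min_floor {s t : ℝ} (hs : 0 ≤ s) (ht : 0 ≤ t) :
    Tendsto (fun n : ℕ => (n : ℝ)⁻¹ * ((min ⌊(n : ℝ) * s⌋₊ ⌊(n : ℝ) * t⌋₊ : ℕ) : ℝ))
      atTop (nhds (min s t)) := by
  have hfloor : ∀ {a : ℝ}, 0 ≤ a →
      Tendsto (fun n : ℕ => (n : ℝ)⁻¹ * ⌊(n : ℝ) * a⌋₊) atTop (nhds a) := fun {a} ha => by
    simpa only [Function.comp_def, mul_comm _ a, inv_mul_eq_div] using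
      (tendsto_nat_floor_mul_div_atTop ha).comp tendsto_natCast_atTop_atTop
  refine ((hfloor hs).min (hfloor ht)).congr fun n => ?_
  rw [Nat.cast_min, mul_min_of_nonneg _ _ (inv_nonneg.2 n.cast_nonneg)]

theorem variance_trivial_case_general
    {Ω : Type*} [MeasurableSpace Ω] (P : Measure Ω) [IsProbabilityMeasure P]
    (ε : ℕ → ℕ → Ω → ℝ)
    (hmeas : ∀ k ℓ : ℕ, Measurable (ε k ℓ))
    (hindep : iIndepFun
      (fun p : {p : ℕ × ℕ // 1 ≤ p.1 ∧ 1 ≤ p.2} => ε p.1.1 p.1.2) P)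
    (hvar : ∀ k ℓ : ℕ, 1 ≤ k → 1 ≤ ℓ → variance (ε k ℓ) P = 1)
    (α β γ : ℝ)
    (X : ℕ → ℕ → Ω → ℝ)
    (hrec : ∀ k ℓ : ℕ, 1 ≤ k → 1 ≤ ℓ → ∀ ω : Ω,
      X k ℓ ω = α * X (k - 1) ℓ ω + β * X k (ℓ - 1) ω + γ * X (k - 1) (ℓ - 1) ω + ε k ℓ ω)
    (hbd1 : ∀ k : ℕ, ∀ ω : Ω, X k 0 ω = 0)
    (hbd2 : ∀ ℓ : ℕ, ∀ ω : Ω, X 0 ℓ ω = 0)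
    (hα : α = 0) (hβ : β = 0) (hγ : |γ| = 1) :
    (∀ k ℓ : ℕ, variance (X k ℓ) P = ((min k ℓ : ℕ) : ℝ)) ∧
    ∀ s t : ℝ, 0 < s → 0 < t →
      Tendsto (fun n : ℕ => ((n : ℝ))⁻¹ * variance (X ⌊(n : ℝ) * s⌋₊ ⌊(n : ℝ) * t⌋₊) P)
        atTop (nhds (min s t)) := by
  have hdiag : ∀ k ℓ, X (k + 1) (ℓ + 1) = γ • X k ℓ + ε (k + 1) (ℓ + 1) := fun k ℓ =>
    funext fun ω => by simpa [hα, hβ] using hrec (k + 1) (ℓ + 1) (by omega) (by omega) ω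
  have hvarX : ∀ k ℓ : ℕ, variance (X k ℓ) P = ((min k ℓ : ℕ) : ℝ) := fun k ℓ => by
    rw [eq_sum_of_diagonal_recursion hdiag (fun k => funext (hbd1 k)) (fun ℓ => funext (hbd2 ℓ))]
    exact variance_sum_range_min_diagonal hmeas hindep hvar hγ k ℓ
  refine ⟨hvarX, fun s t hs ht => ?_⟩
  simpa only [hvarX] using tendsto_inv_mul_min_floor hs.le ht.le

theorem variance_trivial_case
    {Ω : Type*} [MeasurableSpace Ω] (P : Measure Ω) [IsProbabilityMeasure P]
    (ε : ℕ → ℕ → Ω → ℝ)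
    (hmeas : ∀ k ℓ : ℕ, Measurable (ε k ℓ))
    (hindep : iIndepFun
      (fun p : {p : ℕ × ℕ // 1 ≤ p.1 ∧ 1 ≤ p.2} => ε p.1.1 p.1.2) P)
    (hmean : ∀ k ℓ : ℕ, 1 ≤ k → 1 ≤ ℓ → ∫ ω, ε k ℓ ω ∂P = 0)
    (hvar : ∀ k ℓ : ℕ, 1 ≤ k → 1 ≤ ℓ → variance (ε k ℓ) P = 1)
    (α β γ : ℝ)
    (X : ℕ → ℕ → Ω → ℝ)
    (hrec : ∀ k ℓ : ℕ, 1 ≤ k → 1 ≤ ℓ → ∀ ω : Ω,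
      X k ℓ ω = α * X (k - 1) ℓ ω + β * X k (ℓ - 1) ω + γ * X (k - 1) (ℓ - 1) ω + ε k ℓ ω)
    (hbd1 : ∀ k : ℕ, ∀ ω : Ω, X k 0 ω = 0)
    (hbd2 : ∀ ℓ : ℕ, ∀ ω : Ω, X 0 ℓ ω = 0)
    (hα : α = 0) (hβ : β = 0) (hγ : |γ| = 1) :
    (∀ k ℓ : ℕ, variance (X k ℓ) P = ((min k ℓ : ℕ) : ℝ)) ∧
    ∀ s t : ℝ, 0 < s → 0 < t →
      Tendsto (fun n : ℕ => ((n : ℝ))⁻¹ * variance (X ⌊(n : ℝ) * s⌋₊ ⌊(n : ℝ) * t⌋₊) P)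
        atTop (nhds (min s t)) :=
  variance_trivial_case_general P ε hmeas hindep hvar α β γ X hrec hbd1 hbd2 hα hβ hγ
end
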